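/- arXiv:2511.06669 — 5 statements merged into one kernel-verified Lean document; each statement's English description precedes it below -/
import Mathlib

section
/- For an integrable f : ℝ≥0 → ℂ with finite moments, a positive integer k and β ∈ ℂ*, the integral ∫_ℂ f(|z|²) z^{k-1} / (β − conj(z)) d²z (as a principal value in the angular variable) equals (π/β^k) · M[f](k, |β|²), where M[f](k, A) = ∫₀^A t^{k-1} f(t) dt is the incomplete Mellin transform. -/
open MeasureTheory Set


noncomputable section

lemma aux_image_sq (a : ℝ) (ha : 0 < a) :
    (fun x : ℝ => x ^ 2) '' Ioo 0 a = Ioo 0 (a ^ 2) := by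
  ext t
  constructor
  · rintro ⟨x, ⟨hx0, hxa⟩, rfl⟩
    exact ⟨by positivity, by dsimp only; nlinarith⟩
  · rintro ⟨ht0, hta⟩
    exact ⟨Real.sqrt t, ⟨Real.sqrt_pos.2 ht0,
      by rw [show a = Real.sqrt (a ^ 2) by rw [Real.sqrt_sq ha.le]];
         exact Real.sqrt_lt_sqrt ht0.le hta⟩, Real.sq_sqrt ht0.le⟩

lemma aux_integrableOn_polar (f : ℂ → ℂ) (hf : Integrable f) :
    IntegrableOn (fun p : ℝ × ℝ => p.1 • f (Complex.polarCoord.symm p))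
      polarCoord.target := by
  set B : ℝ × ℝ → ℝ × ℝ →L[ℝ] ℝ × ℝ := fun p =>
    LinearMap.toContinuousLinearMap (Matrix.toLin (Module.Basis.finTwoProd ℝ) (Module.Basis.finTwoProd ℝ)
      !![Real.cos p.2, -p.1 * Real.sin p.2; Real.sin p.2, p.1 * Real.cos p.2]) with hBdef
  have hB : ∀ p ∈ polarCoord.target,
      HasFDerivWithinAt polarCoord.symm (B p) polarCoord.target p :=
    fun p _ => (hasFDerivAt_polarCoord_symm p).hasFDerivWithinAt
  have B_det : ∀ p, (B p).det = p.1 := by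
    intro p
    conv_rhs => rw [← one_mul p.1, ← Real.cos_sq_add_sin_sq p.2]
    simp only [hBdef, neg_mul, LinearMap.det_toContinuousLinearMap, LinearMap.det_toLin,
      Matrix.det_fin_two_of, sub_neg_eq_add]
    ring
  have hG : Integrable (fun p : ℝ × ℝ => f (Complex.measurableEquivRealProd.symm p)) :=
    ((Complex.volume_preserving_equiv_real_prod.symm Complex.measurableEquivRealProd).integrable_comp_emb
      Complex.measurableEquivRealProd.symm.measurableEmbedding).mpr hf
  have h1 : IntegrableOn (fun p : ℝ × ℝ => f (Complex.measurableEquivRealProd.symm p))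
      (polarCoord.symm '' polarCoord.target) := hG.integrableOn
  rw [integrableOn_image_iff_integrableOn_abs_det_fderiv_smul volume
      polarCoord.open_target.measurableSet hB
      (polarCoord.symm.injOn) _] at h1
  refine h1.congr_fun (fun p hp => ?_) polarCoord.open_target.measurableSet
  beta_reduce
  rw [B_det, abs_of_pos hp.1]
  rfl

lemma aux_angular (m : ℕ) (β : ℂ) (hβ : β ≠ 0) (r : ℝ) (hr : 0 < r)
    (hne : r ≠ ‖β‖) :
    (∫ θ in Ioo (-Real.pi) Real.pi,
        Complex.exp (θ * Complex.I) ^ (m + 1) / (β * Complex.exp (θ * Complex.I) - r)) =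
      if r < ‖β‖ then 2 * Real.pi * (r : ℂ) ^ m / β ^ (m + 1) else 0 := by
  set h : ℝ → ℂ := fun θ =>
    Complex.exp (θ * Complex.I) ^ (m + 1) / (β * Complex.exp (θ * Complex.I) - r) with hh
  have hden : ∀ θ : ℝ, β * Complex.exp (θ * Complex.I) - r ≠ 0 := by
    intro θ h0
    apply hne
    have h1 : β * Complex.exp (θ * Complex.I) = (r : ℂ) := sub_eq_zero.mp h0
    have h2 := congrArg (‖·‖) h1
    simpa [norm_mul, Complex.norm_exp_ofReal_mul_I, abs_of_pos hr] using h2.symm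
  have hper : Function.Periodic h (2 * Real.pi) := by
    intro θ
    have he : ((θ + 2 * Real.pi : ℝ) : ℂ) * Complex.I
        = θ * Complex.I + 2 * Real.pi * Complex.I := by push_cast; ring
    simp only [hh, he, Complex.exp_add, Complex.exp_two_pi_mul_I, mul_one]
  have h1 : (∫ θ in Ioo (-Real.pi) Real.pi, h θ) = ∫ θ in (0:ℝ)..(2*Real.pi), h θ := by
    rw [← MeasureTheory.integral_Ioc_eq_integral_Ioo,
      ← intervalIntegral.integral_of_le (by linarith [Real.pi_pos] : (-Real.pi) ≤ Real.pi)]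
    have h2 := hper.intervalIntegral_add_eq (-Real.pi) 0
    simpa [show -Real.pi + 2*Real.pi = Real.pi by ring] using h2
  set g : ℂ → ℂ := fun w => w ^ m / (β * w - r) with hg
  have hcirc : (∮ w in C(0,1), g w) = Complex.I * ∫ θ in (0:ℝ)..(2*Real.pi), h θ := by
    rw [circleIntegral, ← intervalIntegral.integral_const_mul]
    refine intervalIntegral.integral_congr fun θ _ => ?_
    simp only [hh, hg, deriv_circleMap, circleMap, Complex.ofReal_one, one_mul, zero_add,
      smul_eq_mul]
    rw [pow_succ]
    ring
  have key : ∀ S : ℂ, -Complex.I * (Complex.I * S) = S := by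
    intro S; rw [← mul_assoc, neg_mul, Complex.I_mul_I, neg_neg, one_mul]
  have hS : (∫ θ in (0:ℝ)..(2*Real.pi), h θ) = -Complex.I * ∮ w in C(0,1), g w := by
    rw [hcirc, key]
  have hβ' : 0 < ‖β‖ := by
    simpa using norm_pos_iff.mpr hβ
  rcases lt_or_gt_of_ne hne with hlt | hgt
  · have hw : (r : ℂ) / β ∈ Metric.ball (0:ℂ) 1 := by
      simp only [Metric.mem_ball, dist_zero_right, norm_div,
        Complex.norm_real, Real.norm_eq_abs, abs_of_pos hr]
      rw [div_lt_one hβ']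
      exact hlt
    have hfun : g = fun w => β⁻¹ • (((w - (r:ℂ)/β))⁻¹ • w ^ m) := by
      funext w
      simp only [hg, smul_eq_mul]
      rw [show β * w - (r:ℂ) = β * (w - (r:ℂ)/β) by field_simp, div_eq_mul_inv, mul_inv]
      ring
    have hcau := (differentiable_pow m).differentiableOn.circleIntegral_sub_inv_smul
      (c := 0) (R := 1) hw
    rw [h1, hS, hfun, circleIntegral.integral_smul, hcau, if_pos hlt]
    simp only [smul_eq_mul, div_pow]
    field_simp
    ring_nf
    rw [Complex.I_sq]
    ring
  · have hzero : (∮ w in C(0,1), g w) = 0 := by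
      have hden2 : ∀ w : ℂ, ‖w‖ ≤ 1 → β * w - r ≠ 0 := by
        intro w hw h0
        have h1 : β * w = (r : ℂ) := sub_eq_zero.mp h0
        have h2 := congrArg (‖·‖) h1
        rw [norm_mul, Complex.norm_real, Real.norm_eq_abs, abs_of_pos hr] at h2
        nlinarith [norm_nonneg w, norm_nonneg β]
      apply Complex.circleIntegral_eq_zero_of_differentiable_on_off_countable zero_le_one
        Set.countable_empty
      · intro w hw
        simp only [Metric.mem_closedBall, dist_zero_right] at hw
        exact ((differentiable_pow m).differentiableAt.div
          ((differentiable_const β |>.mul differentiable_id).sub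
            (differentiable_const _) |>.differentiableAt)
          (hden2 w hw)).continuousAt.continuousWithinAt
      · intro w hw
        simp only [Metric.mem_ball, dist_zero_right, mem_diff,
          mem_empty_iff_false, not_false_iff, and_true] at hw
        exact (differentiable_pow m).differentiableAt.div
          ((differentiable_const β |>.mul differentiable_id).sub
            (differentiable_const _) |>.differentiableAt)
          (hden2 w hw.le)
    rw [h1, hS, hzero, if_neg (by push_neg; exact hgt.le; )]
    ring

end

/-- For integrable `f` with finite `(k-1)`st moment and `β ≠ 0`,
`∫_ℂ f(|z|²) z^(k-1)/(β − conj z) d²z = (π/β^k) · M[f](k, |β|²)`,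
where `M[f](k, A) = ∫₀^A t^(k-1) f(t) dt` is the incomplete Mellin transform. -/
theorem complex_integral_incomplete_mellin (f : ℝ → ℂ) (k : ℕ) (hk : 1 ≤ k)
    (β : ℂ) (hβ : β ≠ 0) (hmeas : Measurable f)
    (hf1 : IntegrableOn f (Ioi 0))
    (hmom : IntegrableOn (fun t : ℝ => t ^ (k - 1) * ‖f t‖) (Ioi 0))
    (hint : Integrable (fun z : ℂ =>
      f (‖z‖ ^ 2) * z ^ (k - 1) / (β - starRingEnd ℂ z))) :
    ∫ z : ℂ, f (‖z‖ ^ 2) * z ^ (k - 1) / (β - starRingEnd ℂ z) =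
      (Real.pi : ℂ) / β ^ k *
        ∫ t in Ioc (0 : ℝ) (‖β‖ ^ 2), (t : ℂ) ^ (k - 1) * f t := by
  obtain ⟨m, rfl⟩ : ∃ m, k = m + 1 := ⟨k - 1, (Nat.succ_pred_eq_of_pos hk).symm⟩
  simp only [Nat.add_sub_cancel] at hint ⊢
  set F : ℂ → ℂ := fun z => f (‖z‖ ^ 2) * z ^ m / (β - starRingEnd ℂ z) with hF
  have hβ' : 0 < ‖β‖ := norm_pos_iff.mpr hβ
  have hInt := aux_integrableOn_polar F hint
  rw [← Complex.integral_comp_polarCoord_symm F, polarCoord_target] at *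
  rw [MeasureTheory.Measure.volume_eq_prod] at hInt ⊢
  rw [setIntegral_prod _ hInt]
  have hae : (fun r : ℝ => ∫ θ in Ioo (-Real.pi) Real.pi,
        ((r, θ) : ℝ × ℝ).1 • F (Complex.polarCoord.symm (r, θ)))
      =ᵐ[volume.restrict (Ioi (0:ℝ))]
      (fun r : ℝ => Set.indicator (Ioo 0 (‖β‖))
        (fun r => (2 * (Real.pi : ℂ) / β ^ (m+1)) * (f (r^2) * (r:ℂ) ^ (2*m+1))) r) := by
    have h1 : ∀ᵐ r ∂(volume.restrict (Ioi (0:ℝ))), r ≠ ‖β‖ := by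
      refine ae_restrict_of_ae ?_
      have : ({‖β‖} : Set ℝ) =ᵐ[volume] (∅ : Set ℝ) := by
        simp [ae_eq_empty]
      filter_upwards [measure_eq_zero_iff_ae_notMem.mp (measure_singleton (‖β‖))] with x hx
      exact hx
    filter_upwards [h1, ae_restrict_mem measurableSet_Ioi] with r hrne hr
    have hr0 : (0:ℝ) < r := hr
    have hsymm : ∀ θ : ℝ, Complex.polarCoord.symm (r, θ)
        = (r : ℂ) * Complex.exp (θ * Complex.I) := by
      intro θ
      rw [Complex.polarCoord_symm_apply, Complex.exp_mul_I, ← Complex.ofReal_cos,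
        ← Complex.ofReal_sin]
    have hEE : ∀ θ : ℝ, Complex.exp (θ * Complex.I) ≠ 0 := fun θ => Complex.exp_ne_zero _
    have hD1 : ∀ θ : ℝ, β - (r:ℂ) * (Complex.exp (θ * Complex.I))⁻¹ ≠ 0 := by
      intro θ h0
      apply hrne
      have h1 : β = (r:ℂ) * (Complex.exp (θ * Complex.I))⁻¹ := sub_eq_zero.mp h0
      have h2 := congrArg (‖·‖) h1
      simpa [norm_mul, norm_inv, Complex.norm_exp_ofReal_mul_I, abs_of_pos hr0] using h2.symm
    have hD2 : ∀ θ : ℝ, β * Complex.exp (θ * Complex.I) - (r:ℂ) ≠ 0 := by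
      intro θ h0
      apply hrne
      have h1 : β * Complex.exp (θ * Complex.I) = (r : ℂ) := sub_eq_zero.mp h0
      have h2 := congrArg (‖·‖) h1
      simpa [norm_mul, Complex.norm_exp_ofReal_mul_I, abs_of_pos hr0] using h2.symm
    have hconj : ∀ θ : ℝ, starRingEnd ℂ ((r:ℂ) * Complex.exp (θ * Complex.I))
        = (r:ℂ) * (Complex.exp (θ * Complex.I))⁻¹ := by
      intro θ
      rw [map_mul, Complex.conj_ofReal, ← Complex.exp_conj,
        show (starRingEnd ℂ) ((θ:ℂ) * Complex.I) = -((θ:ℂ) * Complex.I) by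
          simp [Complex.conj_ofReal],
        Complex.exp_neg]
    have habs : ∀ θ : ℝ, ‖(r:ℂ) * Complex.exp (θ * Complex.I)‖ ^ 2 = r ^ 2 := by
      intro θ
      rw [norm_mul, Complex.norm_exp_ofReal_mul_I, Complex.norm_real, mul_one, Real.norm_eq_abs, _root_.sq_abs]
    have hptwise : ∀ θ ∈ Ioo (-Real.pi) Real.pi,
        ((r, θ) : ℝ × ℝ).1 • F (Complex.polarCoord.symm (r, θ))
        = (f (r^2) * (r:ℂ)^(m+1)) *
          (Complex.exp (θ * Complex.I) ^ (m + 1)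
            / (β * Complex.exp (θ * Complex.I) - r)) := by
      intro θ _
      simp only [hF, hsymm θ, habs θ, hconj θ]
      rw [Complex.real_smul]
      field_simp [hD1 θ, hD2 θ]
      ring
    rw [setIntegral_congr_fun measurableSet_Ioo hptwise, MeasureTheory.integral_const_mul,
      aux_angular m β hβ r hr0 hrne]
    by_cases hlt : r < ‖β‖
    · rw [if_pos hlt, Set.indicator_of_mem (Set.mem_Ioo.mpr ⟨hr0, hlt⟩)]
      field_simp
      ring
    · rw [if_neg hlt, Set.indicator_of_notMem (fun hc => hlt hc.2), mul_zero]
  rw [MeasureTheory.integral_congr_ae hae, setIntegral_indicator measurableSet_Ioo,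
    Set.inter_eq_self_of_subset_right Set.Ioo_subset_Ioi_self,
    MeasureTheory.integral_const_mul]
  have hderiv : ∀ x ∈ Ioo (0:ℝ) (‖β‖),
      HasDerivWithinAt (fun x : ℝ => x ^ 2) (2*x) (Ioo (0:ℝ) (‖β‖)) x := fun x _ => by
    simpa using (hasDerivAt_pow 2 x).hasDerivWithinAt
  have hinj : InjOn (fun x : ℝ => x ^ 2) (Ioo (0:ℝ) (‖β‖)) := by
    intro a ha b hb hab
    dsimp only at hab
    rcases lt_trichotomy a b with h|h|h
    · nlinarith [ha.1, hb.1]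
    · exact h
    · nlinarith [ha.1, hb.1]
  have hsub : (∫ t in Ioc (0:ℝ) (‖β‖ ^ 2), (t:ℂ)^m * f t)
      = 2 * ∫ r in Ioo (0:ℝ) (‖β‖), f (r^2) * (r:ℂ)^(2*m+1) := by
    rw [MeasureTheory.integral_Ioc_eq_integral_Ioo, ← aux_image_sq _ hβ',
      integral_image_eq_integral_abs_deriv_smul measurableSet_Ioo hderiv hinj,
      ← smul_eq_mul, ← integral_smul]
    refine setIntegral_congr_fun measurableSet_Ioo (fun x hx => ?_)
    have hx0 : (0:ℝ) < x := hx.1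
    rw [abs_of_pos (by positivity : (0:ℝ) < 2*x), Complex.real_smul, smul_eq_mul]
    push_cast
    ring
  rw [hsub]
  field_simp
end

section
/- For an integrable f : ℝ≥0 → ℂ and distinct nonzero complex numbers α ≠ β, the integral ∫_ℂ f(|z|²)/((α − z)(β − conj z)) d²z equals π ( ∫₀^{min(|α|,|β|)²} f(t)/(αβ − t) dt − ∫_{max(|α|,|β|)²}^∞ f(t)/(αβ − t) dt ), interpreting the angular integral as a principal value. -/
open MeasureTheory Set

open scoped Real

lemma integral_exp_int_ne (m : ℤ) (hm : m ≠ 0) :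
    ∫ θ in Ioo (-Real.pi) Real.pi, Complex.exp (m * θ * Complex.I) = 0 := by
  have hpi : (-Real.pi) ≤ Real.pi := by linarith [Real.pi_pos]
  rw [← integral_Ioc_eq_integral_Ioo, ← intervalIntegral.integral_of_le hpi]
  have hc : (m : ℂ) * Complex.I ≠ 0 := by
    simp [Complex.ext_iff, hm, Complex.I_ne_zero]
  have : ∀ θ : ℝ, (m : ℂ) * θ * Complex.I = (m * Complex.I) * θ := by intro θ; ring
  simp_rw [this]
  rw [integral_exp_mul_complex hc]
  have h1 : (m : ℂ) * Complex.I * (Real.pi : ℂ) = m * (Real.pi * Complex.I) := by ring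
  have h2 : (m : ℂ) * Complex.I * ((-Real.pi : ℝ) : ℂ) = ((-m : ℤ) : ℂ) * (Real.pi * Complex.I) := by
    push_cast; ring
  rw [h1, h2, Complex.exp_int_mul, Complex.exp_int_mul, Complex.exp_pi_mul_I]
  rw [zpow_neg]
  have : ((-1 : ℂ) ^ m)⁻¹ = (-1 : ℂ) ^ m := by
    rcases Int.even_or_odd m with h | h
    · rw [h.neg_one_zpow]; norm_num
    · rw [h.neg_one_zpow]; norm_num
  rw [this, sub_self, zero_div]

lemma integral_one_Ioo : ∫ _θ in Ioo (-Real.pi) Real.pi, (1 : ℂ) = 2 * Real.pi := by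
  rw [setIntegral_const]
  rw [Real.volume_real_Ioo]
  have : Real.pi - (-Real.pi) = 2 * Real.pi := by ring
  rw [this, max_eq_left (by positivity)]
  simp [Complex.real_smul]

lemma angular_pos (c s : ℂ) (h : ‖s‖ < ‖c‖) :
    ∫ θ in Ioo (-Real.pi) Real.pi, (c - s * Complex.exp (θ * Complex.I))⁻¹
      = 2 * Real.pi / c := by
  have hc : c ≠ 0 := by
    rintro rfl
    exact (norm_nonneg s).not_gt (by simpa using h)
  set F : ℕ → ℝ → ℂ := fun n θ => c⁻¹ * ((s / c) * Complex.exp (θ * Complex.I)) ^ n with hF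
  have hnorm : ∀ (n : ℕ) (θ : ℝ), ‖F n θ‖ = ‖c⁻¹‖ * ‖s / c‖ ^ n := by
    intro n θ
    simp [hF, norm_mul, norm_pow, Complex.norm_exp_ofReal_mul_I]
  have hratio : ‖s / c‖ < 1 := by
    rw [norm_div, div_lt_one (by simpa using (norm_nonneg s).trans_lt h)]
    exact h
  have hpt : ∀ θ : ℝ, (c - s * Complex.exp (θ * Complex.I))⁻¹ = ∑' n, F n θ := by
    intro θ
    have hx : ‖(s / c) * Complex.exp (θ * Complex.I)‖ < 1 := by
      rw [norm_mul, Complex.norm_exp_ofReal_mul_I, mul_one]; exact hratio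
    rw [hF]
    simp only
    rw [tsum_mul_left, tsum_geometric_of_norm_lt_one hx, ← mul_inv]
    congr 1
    field_simp
  have hcont : ∀ n : ℕ, Continuous (F n) := by
    intro n
    fun_prop
  have hintg : ∀ n : ℕ, Integrable (F n) (volume.restrict (Ioo (-Real.pi) Real.pi)) := by
    intro n
    exact ((hcont n).integrableOn_Icc (μ := volume)).mono_set Ioo_subset_Icc_self
  have hsum : Summable fun n => ∫ θ in Ioo (-Real.pi) Real.pi, ‖F n θ‖ := by
    have : ∀ n, (∫ θ in Ioo (-Real.pi) Real.pi, ‖F n θ‖)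
        = (2 * Real.pi) * (‖c⁻¹‖ * ‖s / c‖ ^ n) := by
      intro n
      simp_rw [hnorm n]
      rw [setIntegral_const, Real.volume_real_Ioo, smul_eq_mul]
      congr 1
      rw [show Real.pi - (-Real.pi) = 2 * Real.pi by ring,
        max_eq_left (by positivity)]
    simp_rw [this]
    exact ((summable_geometric_of_lt_one (by positivity) hratio).mul_left _).mul_left _
  calc ∫ θ in Ioo (-Real.pi) Real.pi, (c - s * Complex.exp (θ * Complex.I))⁻¹
      = ∫ θ in Ioo (-Real.pi) Real.pi, ∑' n, F n θ := by
        exact setIntegral_congr_fun measurableSet_Ioo fun θ _ => hpt θ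
    _ = ∑' n, ∫ θ in Ioo (-Real.pi) Real.pi, F n θ :=
        (integral_tsum_of_summable_integral_norm hintg hsum).symm
    _ = 2 * Real.pi / c := by
        have hzero : ∀ n : ℕ, n ≠ 0 → (∫ θ in Ioo (-Real.pi) Real.pi, F n θ) = 0 := by
          intro n hn
          have : ∀ θ : ℝ, F n θ = (c⁻¹ * (s / c) ^ n) *
              Complex.exp (((n : ℤ) : ℂ) * θ * Complex.I) := by
            intro θ
            rw [hF]
            simp only
            rw [mul_pow, ← Complex.exp_nat_mul]
            push_cast
            ring_nf
          simp_rw [this]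
          rw [integral_const_mul, integral_exp_int_ne n (by exact_mod_cast hn), mul_zero]
        rw [tsum_eq_single 0 hzero]
        have : ∀ θ : ℝ, F 0 θ = c⁻¹ * 1 := by intro θ; simp [hF]
        simp_rw [this]
        rw [integral_const_mul, integral_one_Ioo]
        field_simp

lemma angular_neg (c s : ℂ) (h : ‖c‖ < ‖s‖) :
    ∫ θ in Ioo (-Real.pi) Real.pi, (c - s * Complex.exp (θ * Complex.I))⁻¹ = 0 := by
  have hs : s ≠ 0 := by
    rintro rfl
    exact (norm_nonneg c).not_gt (by simpa using h)
  set F : ℕ → ℝ → ℂ := fun n θ =>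
    -(s⁻¹ * (Complex.exp (θ * Complex.I))⁻¹ *
      ((c / s) * (Complex.exp (θ * Complex.I))⁻¹) ^ n) with hF
  have hexp : ∀ θ : ℝ, ‖(Complex.exp (θ * Complex.I))‖ = 1 := fun θ => by
    simpa using Complex.norm_exp_ofReal_mul_I θ
  have hratio : ‖c / s‖ < 1 := by
    rw [norm_div, div_lt_one (by simpa using (norm_nonneg c).trans_lt h)]
    exact h
  have hnorm : ∀ (n : ℕ) (θ : ℝ), ‖F n θ‖ = ‖s⁻¹‖ * ‖c / s‖ ^ n := by
    intro n θ
    simp only [hF, norm_neg, norm_mul, norm_pow, norm_inv, hexp, inv_one,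
      mul_one]
  have hpt : ∀ θ : ℝ, (c - s * Complex.exp (θ * Complex.I))⁻¹ = ∑' n, F n θ := by
    intro θ
    set u := Complex.exp (θ * Complex.I) with hu
    have hune : u ≠ 0 := Complex.exp_ne_zero _
    have huabs : ‖u‖ = 1 := hexp θ
    have hx : ‖(c / s) * u⁻¹‖ < 1 := by
      simpa [norm_mul, norm_inv, huabs] using hratio
    have hden : c - s * u ≠ 0 := by
      intro h0
      have hc : c = s * u := by linear_combination h0
      rw [hc, norm_mul, huabs, mul_one] at h
      exact lt_irrefl _ h
    have hsu : s * u - c ≠ 0 := by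
      intro h0
      exact hden (by linear_combination -h0)
    have hden2 : 1 - c / s * u⁻¹ ≠ 0 := by
      intro h0
      have key : (1 - c / s * u⁻¹) * (s * u) = -(c - s * u) := by
        field_simp
        ring
      rw [h0, zero_mul] at key
      exact hden (by linear_combination key)
    rw [hF]
    simp only
    rw [tsum_neg, tsum_mul_left, tsum_geometric_of_norm_lt_one hx]
    field_simp
    rw [hu]
    ring
  have hcont : ∀ n : ℕ, Continuous (F n) := by
    intro n
    have : Continuous fun θ : ℝ => (Complex.exp (θ * Complex.I))⁻¹ := by
      rw [show (fun θ : ℝ => (Complex.exp (θ * Complex.I))⁻¹)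
        = fun θ : ℝ => Complex.exp (-(θ * Complex.I)) from
          funext fun θ => (Complex.exp_neg _).symm]
      fun_prop
    fun_prop
  have hintg : ∀ n : ℕ, Integrable (F n) (volume.restrict (Ioo (-Real.pi) Real.pi)) :=
    fun n => ((hcont n).integrableOn_Icc (μ := volume)).mono_set Ioo_subset_Icc_self
  have hsum : Summable fun n => ∫ θ in Ioo (-Real.pi) Real.pi, ‖F n θ‖ := by
    have heq : ∀ n, (∫ θ in Ioo (-Real.pi) Real.pi, ‖F n θ‖)
        = (2 * Real.pi) * (‖s⁻¹‖ * ‖c / s‖ ^ n) := by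
      intro n
      simp_rw [hnorm n]
      rw [setIntegral_const, Real.volume_real_Ioo, smul_eq_mul,
        show Real.pi - (-Real.pi) = 2 * Real.pi by ring,
        max_eq_left (by positivity)]
    simp_rw [heq]
    exact ((summable_geometric_of_lt_one (by positivity) hratio).mul_left _).mul_left _
  calc ∫ θ in Ioo (-Real.pi) Real.pi, (c - s * Complex.exp (θ * Complex.I))⁻¹
      = ∫ θ in Ioo (-Real.pi) Real.pi, ∑' n, F n θ :=
        setIntegral_congr_fun measurableSet_Ioo fun θ _ => hpt θ
    _ = ∑' n, ∫ θ in Ioo (-Real.pi) Real.pi, F n θ :=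
        (integral_tsum_of_summable_integral_norm hintg hsum).symm
    _ = 0 := by
        have hzero : ∀ n : ℕ, (∫ θ in Ioo (-Real.pi) Real.pi, F n θ) = 0 := by
          intro n
          have hrw : ∀ θ : ℝ, F n θ = (-(s⁻¹ * (c / s) ^ n)) *
              Complex.exp (((-(n + 1) : ℤ) : ℂ) * θ * Complex.I) := by
            intro θ
            rw [hF]
            simp only
            have : Complex.exp (((-(n + 1) : ℤ) : ℂ) * θ * Complex.I)
                = (Complex.exp (θ * Complex.I))⁻¹ ^ (n + 1) := by
              rw [show ((-(n + 1) : ℤ) : ℂ) * θ * Complex.I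
                  = ((-(n + 1) : ℤ) : ℂ) * (θ * Complex.I) by ring,
                Complex.exp_int_mul, zpow_neg, ← inv_zpow]
              norm_cast
            rw [this, mul_pow]
            ring
          simp_rw [hrw]
          rw [integral_const_mul, integral_exp_int_ne _ (by omega), mul_zero]
        simp_rw [hzero]
        exact tsum_zero

lemma inner_int (α β : ℂ) (hα : α ≠ 0) (r : ℝ) (hr : 0 < r)
    (hrα : r ≠ ‖α‖) (hrβ : r ≠ ‖β‖)
    (hd : α * β - (r : ℂ) ^ 2 ≠ 0) :
    ∫ θ in Ioo (-Real.pi) Real.pi,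
      ((α - r * Complex.exp (θ * Complex.I)) *
        (β - r * (Complex.exp (θ * Complex.I))⁻¹))⁻¹
      = 2 * Real.pi * ((if r < ‖α‖ then 1 else 0)
          - (if ‖β‖ < r then 1 else 0)) / (α * β - (r : ℂ) ^ 2) := by
  have hrc : (r : ℂ) ≠ 0 := by exact_mod_cast hr.ne'
  have hexp : ∀ θ : ℝ, ‖(Complex.exp (θ * Complex.I))‖ = 1 := fun θ => by
    simpa using Complex.norm_exp_ofReal_mul_I θ
  have habsr : ‖(r : ℂ)‖ = r := by
    rw [Complex.norm_real, Real.norm_eq_abs, abs_of_pos hr]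
  have h1 : ∀ θ : ℝ, α - r * Complex.exp (θ * Complex.I) ≠ 0 := by
    intro θ h0
    apply hrα
    have : α = r * Complex.exp (θ * Complex.I) := by linear_combination h0
    rw [this, norm_mul, hexp, mul_one, habsr]
  have h2 : ∀ θ : ℝ, (r : ℂ) - β * Complex.exp (θ * Complex.I) ≠ 0 := by
    intro θ h0
    apply hrβ
    have : (r : ℂ) = β * Complex.exp (θ * Complex.I) := by linear_combination h0
    rw [← habsr, this, norm_mul, hexp, mul_one]
  have h3 : ∀ θ : ℝ, β - r * (Complex.exp (θ * Complex.I))⁻¹ ≠ 0 := by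
    intro θ h0
    apply h2 θ
    have hune : Complex.exp (θ * Complex.I) ≠ 0 := Complex.exp_ne_zero _
    have : (β - r * (Complex.exp (θ * Complex.I))⁻¹) * Complex.exp (θ * Complex.I)
        = -((r : ℂ) - β * Complex.exp (θ * Complex.I)) := by
      field_simp
      ring
    rw [h0, zero_mul] at this
    linear_combination this
  set K := (α * β - (r : ℂ) ^ 2)⁻¹ with hK
  have hid : ∀ θ : ℝ,
      ((α - r * Complex.exp (θ * Complex.I)) *
        (β - r * (Complex.exp (θ * Complex.I))⁻¹))⁻¹
      = K * α * (α - r * Complex.exp (θ * Complex.I))⁻¹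
        - K * r * ((r : ℂ) - β * Complex.exp (θ * Complex.I))⁻¹ := by
    intro θ
    have hune : Complex.exp (θ * Complex.I) ≠ 0 := Complex.exp_ne_zero _
    symm
    apply eq_inv_of_mul_eq_one_left
    rw [hK]
    field_simp [h1 θ, h2 θ, hd, hune]
    ring
  have cont1 : Continuous fun θ : ℝ => (α - r * Complex.exp (θ * Complex.I))⁻¹ := by
    apply Continuous.inv₀ _ h1
    fun_prop
  have cont2 : Continuous fun θ : ℝ => ((r : ℂ) - β * Complex.exp (θ * Complex.I))⁻¹ := by
    apply Continuous.inv₀ _ h2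
    fun_prop
  have int1 : Integrable (fun θ : ℝ => K * α * (α - r * Complex.exp (θ * Complex.I))⁻¹)
      (volume.restrict (Ioo (-Real.pi) Real.pi)) :=
    (((continuous_const.mul cont1)).integrableOn_Icc (μ := volume)).mono_set
      Ioo_subset_Icc_self
  have int2 : Integrable (fun θ : ℝ => K * r * ((r : ℂ) - β * Complex.exp (θ * Complex.I))⁻¹)
      (volume.restrict (Ioo (-Real.pi) Real.pi)) :=
    (((continuous_const.mul cont2)).integrableOn_Icc (μ := volume)).mono_set
      Ioo_subset_Icc_self
  rw [setIntegral_congr_fun measurableSet_Ioo (fun θ _ => hid θ), integral_sub int1 int2,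
    integral_const_mul, integral_const_mul]
  have hA : (∫ θ in Ioo (-Real.pi) Real.pi, (α - r * Complex.exp (θ * Complex.I))⁻¹)
      = if r < ‖α‖ then 2 * Real.pi / α else 0 := by
    rcases lt_or_gt_of_ne hrα with hlt | hgt
    · rw [if_pos hlt]
      exact angular_pos α r (by rwa [habsr])
    · rw [if_neg (by exact not_lt.2 hgt.le)]
      exact angular_neg α r (by rwa [habsr])
  have hB : (∫ θ in Ioo (-Real.pi) Real.pi, ((r : ℂ) - β * Complex.exp (θ * Complex.I))⁻¹)
      = if ‖β‖ < r then 2 * Real.pi / (r : ℂ) else 0 := by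
    rcases lt_or_gt_of_ne hrβ with hlt | hgt
    · rw [if_neg (by exact not_lt.2 hlt.le)]
      exact angular_neg (r : ℂ) β (by rwa [habsr])
    · rw [if_pos hgt]
      exact angular_pos (r : ℂ) β (by rwa [habsr])
  rw [hA, hB, hK]
  rcases lt_or_gt_of_ne hrα with h1' | h1' <;> rcases lt_or_gt_of_ne hrβ with h2' | h2'
  · rw [if_pos h1', if_pos h1', if_neg (not_lt.2 h2'.le), if_neg (not_lt.2 h2'.le)]
    field_simp
    ring
  · rw [if_pos h1', if_pos h1', if_pos h2', if_pos h2']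
    field_simp
  · rw [if_neg (not_lt.2 h1'.le), if_neg (not_lt.2 h1'.le),
      if_neg (not_lt.2 h2'.le), if_neg (not_lt.2 h2'.le)]
    simp
  · rw [if_neg (not_lt.2 h1'.le), if_neg (not_lt.2 h1'.le), if_pos h2', if_pos h2']
    field_simp
    ring

lemma integrableOn_polar (g : ℂ → ℂ) (hg : Integrable g) :
    IntegrableOn (fun p : ℝ × ℝ => p.1 • g (Complex.polarCoord.symm p))
      polarCoord.target := by
  set B : ℝ × ℝ → ℝ × ℝ →L[ℝ] ℝ × ℝ := fun p =>
    LinearMap.toContinuousLinearMap (Matrix.toLin (Module.Basis.finTwoProd ℝ) (Module.Basis.finTwoProd ℝ)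
      !![Real.cos p.2, -p.1 * Real.sin p.2; Real.sin p.2, p.1 * Real.cos p.2]) with hB
  have B_det : ∀ p, (B p).det = p.1 := by
    intro p
    conv_rhs => rw [← one_mul p.1, ← Real.cos_sq_add_sin_sq p.2]
    simp only [hB, neg_mul, LinearMap.det_toContinuousLinearMap, LinearMap.det_toLin,
      Matrix.det_fin_two_of, sub_neg_eq_add]
    ring
  have hder : ∀ p ∈ polarCoord.target,
      HasFDerivWithinAt polarCoord.symm (B p) polarCoord.target p := fun p _ =>
    (hasFDerivAt_polarCoord_symm p).hasFDerivWithinAt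
  have hinj : InjOn polarCoord.symm polarCoord.target := by
    have := polarCoord.symm.injOn
    rwa [OpenPartialHomeomorph.symm_source] at this
  have hcomp : Integrable (fun q : ℝ × ℝ => g (Complex.measurableEquivRealProd.symm q)) := by
    exact ((Complex.volume_preserving_equiv_real_prod.symm).integrable_comp_emb
      (Complex.measurableEquivRealProd.symm.measurableEmbedding)).mpr hg
  have h1 : IntegrableOn (fun q : ℝ × ℝ => g (Complex.measurableEquivRealProd.symm q))
      (polarCoord.symm '' polarCoord.target) := hcomp.integrableOn
  have h2 := (integrableOn_image_iff_integrableOn_abs_det_fderiv_smul volume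
    polarCoord.open_target.measurableSet hder hinj
    (fun q : ℝ × ℝ => g (Complex.measurableEquivRealProd.symm q))).mp h1
  refine h2.congr_fun (fun p hp => ?_) polarCoord.open_target.measurableSet
  beta_reduce
  rw [B_det, abs_of_pos hp.1]
  rfl

lemma sq_image_Ioo {m : ℝ} (hm : 0 < m) :
    (fun r : ℝ => r ^ 2) '' Ioo 0 m = Ioo 0 (m ^ 2) := by
  ext x
  constructor
  · rintro ⟨r, ⟨hr0, hrm⟩, rfl⟩
    refine ⟨by positivity, ?_⟩
    show r ^ 2 < m ^ 2
    nlinarith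
  · rintro ⟨hx0, hxm⟩
    exact ⟨Real.sqrt x, ⟨Real.sqrt_pos.mpr hx0, (Real.sqrt_lt' hm).mpr hxm⟩,
      Real.sq_sqrt hx0.le⟩

lemma sq_image_Ioi {M : ℝ} (hM : 0 ≤ M) :
    (fun r : ℝ => r ^ 2) '' Ioi M = Ioi (M ^ 2) := by
  ext x
  constructor
  · rintro ⟨r, hr, rfl⟩
    show M ^ 2 < r ^ 2
    have hrM : M < r := hr
    nlinarith
  · intro hx
    have hx0 : 0 ≤ x := le_trans (by positivity) (le_of_lt hx)
    exact ⟨Real.sqrt x, mem_Ioi.mpr ((Real.lt_sqrt hM).mpr hx),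
      Real.sq_sqrt hx0⟩

lemma sq_injOn_nonneg {s : Set ℝ} (hs : s ⊆ Ici 0) :
    InjOn (fun r : ℝ => r ^ 2) s := by
  intro a ha b hb hab
  simp only at hab
  have h2 : a * a = b * b := by nlinarith [hab]
  rcases mul_self_eq_mul_self_iff.mp h2 with h | h
  · exact h
  · have ha0 : 0 ≤ a := hs ha
    have hb0 : 0 ≤ b := hs hb
    nlinarith

lemma sq_image_integral (φ : ℝ → ℂ) {s : Set ℝ} (hs : MeasurableSet s) (hs0 : s ⊆ Ici 0) :
    ∫ x in (fun r : ℝ => r ^ 2) '' s, φ x = ∫ r in s, (2 * r) • φ (r ^ 2) := by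
  have hder : ∀ r ∈ s, HasDerivWithinAt (fun r : ℝ => r ^ 2) (2 * r) s r := by
    intro r _
    simpa using (hasDerivAt_pow 2 r).hasDerivWithinAt
  rw [integral_image_eq_integral_abs_deriv_smul hs hder (sq_injOn_nonneg hs0) φ]
  refine setIntegral_congr_fun hs fun r hr => ?_
  rw [abs_of_nonneg (by have := hs0 hr; simp at this; positivity)]

lemma sq_roots_null (w : ℂ) : volume {r : ℝ | ((r : ℂ)) ^ 2 = w} = 0 := by
  set S := {r : ℝ | ((r : ℂ)) ^ 2 = w} with hS
  by_cases h : ∃ r0, r0 ∈ S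
  · obtain ⟨r0, hr0⟩ := h
    have hsub : S ⊆ {r0, -r0} := by
      intro r hr
      have : ((r : ℂ)) ^ 2 = ((r0 : ℂ)) ^ 2 := by rw [hr, hr0]
      have hr2 : r ^ 2 = r0 ^ 2 := by exact_mod_cast this
      have h2 : r * r = r0 * r0 := by nlinarith [hr2]
      rcases mul_self_eq_mul_self_iff.mp h2 with h | h
      · exact Or.inl h
      · exact Or.inr h
    exact measure_mono_null hsub
      (((Set.countable_singleton _).insert _).measure_zero _)
  · push_neg at h
    have : S = ∅ := eq_empty_iff_forall_notMem.mpr h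
    simp [this]

/-- For integrable `f` and distinct nonzero `α ≠ β`,
`∫_ℂ f(|z|²)/((α − z)(β − conj z)) d²z
  = π (∫₀^{min(|α|,|β|)²} f(t)/(αβ − t) dt − ∫_{max(|α|,|β|)²}^∞ f(t)/(αβ − t) dt)`. -/
theorem complex_integral_stieltjes (f : ℝ → ℂ) (α β : ℂ)
    (hα : α ≠ 0) (hβ : β ≠ 0) (hαβ : α ≠ β) (hmeas : Measurable f)
    (hf1 : IntegrableOn f (Ioi 0))
    (hint : Integrable (fun z : ℂ =>
      f (‖z‖ ^ 2) / ((α - z) * (β - starRingEnd ℂ z)))) :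
    ∫ z : ℂ, f (‖z‖ ^ 2) / ((α - z) * (β - starRingEnd ℂ z)) =
      (Real.pi : ℂ) *
        ((∫ t in Ioc (0 : ℝ) (min (‖α‖) (‖β‖) ^ 2),
            f t / (α * β - t)) -
          ∫ t in Ioi (max (‖α‖) (‖β‖) ^ 2),
            f t / (α * β - t)) := by
  set aα := ‖α‖ with haα
  set aβ := ‖β‖ with haβ
  have haα0 : 0 < aα := by simpa [haα] using norm_pos_iff.mpr hα
  have haβ0 : 0 < aβ := by simpa [haβ] using norm_pos_iff.mpr hβ
  set m := min aα aβ with hm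
  set M := max aα aβ with hM
  have hm0 : 0 < m := lt_min haα0 haβ0
  have hmM : m ≤ M := min_le_max
  have hM0 : 0 < M := lt_of_lt_of_le hm0 hmM
  set g : ℂ → ℂ := fun z => f (‖z‖ ^ 2) / ((α - z) * (β - starRingEnd ℂ z)) with hgdef
  set φ : ℝ → ℂ := fun t => f t / (α * β - t) with hφ
  set T : ℝ → ℂ := fun r => (r : ℂ) * f (r ^ 2) *
    (2 * (Real.pi : ℂ) * ((if r < aα then 1 else 0) - (if aβ < r then 1 else 0))
      / (α * β - (r : ℂ) ^ 2)) with hT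
  set G1 : ℝ → ℂ := (Ioo 0 m).indicator
    (fun r => (Real.pi : ℂ) * ((2 * r) • φ (r ^ 2))) with hG1
  set G2 : ℝ → ℂ := (Ioi M).indicator
    (fun r => (Real.pi : ℂ) * ((2 * r) • φ (r ^ 2))) with hG2
  -- polar change of variables
  have hpolar := Complex.integral_comp_polarCoord_symm g
  have hIG : IntegrableOn (fun p : ℝ × ℝ => p.1 • g (Complex.polarCoord.symm p))
      polarCoord.target := integrableOn_polar g hint
  have htarget : polarCoord.target = Ioi (0 : ℝ) ×ˢ Ioo (-Real.pi) Real.pi := rfl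
  rw [htarget] at hpolar hIG
  rw [Measure.volume_eq_prod] at hIG hpolar
  have hfub := setIntegral_prod (μ := volume) (ν := volume)
    (fun p : ℝ × ℝ => p.1 • g (Complex.polarCoord.symm p)) hIG
  rw [hfub] at hpolar
  have hIG2 : Integrable (fun p : ℝ × ℝ => p.1 • g (Complex.polarCoord.symm p))
      ((volume.restrict (Ioi (0:ℝ))).prod (volume.restrict (Ioo (-Real.pi) Real.pi))) := by
    rwa [Measure.prod_restrict]
  have hinner_int : Integrable
      (fun r : ℝ => ∫ θ in Ioo (-Real.pi) Real.pi, r • g (Complex.polarCoord.symm (r, θ)))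
      (volume.restrict (Ioi (0:ℝ))) := hIG2.integral_prod_left
  -- a.e. identification of the inner integral
  have hNnull : volume {r : ℝ | r = aα ∨ r = aβ ∨ ((r:ℂ)) ^ 2 = α * β} = 0 := by
    have hset : {r : ℝ | r = aα ∨ r = aβ ∨ ((r:ℂ)) ^ 2 = α * β}
        = {aα} ∪ ({aβ} ∪ {r : ℝ | ((r:ℂ)) ^ 2 = α * β}) := by
      ext r; simp only [Set.mem_union, Set.mem_singleton_iff, Set.mem_setOf_eq]
    rw [hset]
    exact measure_union_null (by simp)
      (measure_union_null (by simp) (sq_roots_null (α * β)))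
  have hgood : ∀ᵐ r ∂(volume.restrict (Ioi (0:ℝ))),
      ¬(r = aα ∨ r = aβ ∨ ((r:ℂ)) ^ 2 = α * β) := by
    apply ae_restrict_of_ae
    rw [ae_iff]
    simp only [not_not]
    exact hNnull
  have hmem : ∀ᵐ r ∂(volume.restrict (Ioi (0:ℝ))), r ∈ Ioi (0:ℝ) :=
    ae_restrict_mem measurableSet_Ioi
  have hae : (fun r : ℝ => ∫ θ in Ioo (-Real.pi) Real.pi,
      r • g (Complex.polarCoord.symm (r, θ)))
      =ᵐ[volume.restrict (Ioi (0:ℝ))] T := by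
    filter_upwards [hmem, hgood] with r hr hbad
    push_neg at hbad
    obtain ⟨hrα, hrβ, hrd⟩ := hbad
    have hr0 : (0:ℝ) < r := hr
    have hd : α * β - (r : ℂ) ^ 2 ≠ 0 := sub_ne_zero.mpr (fun h => hrd h.symm)
    have hz : ∀ θ : ℝ, Complex.polarCoord.symm (r, θ)
        = (r : ℂ) * Complex.exp (θ * Complex.I) := by
      intro θ
      rw [Complex.polarCoord_symm_apply, Complex.exp_mul_I, Complex.ofReal_cos,
        Complex.ofReal_sin]
    have hgval : ∀ θ : ℝ, g (Complex.polarCoord.symm (r, θ))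
        = f (r ^ 2) * ((α - (r : ℂ) * Complex.exp (θ * Complex.I)) *
            (β - (r : ℂ) * (Complex.exp (θ * Complex.I))⁻¹))⁻¹ := by
      intro θ
      rw [hz θ, hgdef]
      simp only
      have habs2 : ‖((r:ℂ) * Complex.exp (θ * Complex.I))‖ ^ 2 = r ^ 2 := by
        rw [norm_mul, Complex.norm_real, Real.norm_eq_abs, abs_of_pos hr0, Complex.norm_exp_ofReal_mul_I,
          mul_one]
      have hconj : starRingEnd ℂ ((r:ℂ) * Complex.exp (θ * Complex.I))
          = (r:ℂ) * (Complex.exp (θ * Complex.I))⁻¹ := by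
        rw [map_mul, Complex.conj_ofReal, ← Complex.exp_conj,
          show (starRingEnd ℂ) ((θ:ℂ) * Complex.I) = -((θ:ℂ) * Complex.I) by simp,
          Complex.exp_neg]
      rw [habs2, hconj, div_eq_mul_inv]
    calc (∫ θ in Ioo (-Real.pi) Real.pi, r • g (Complex.polarCoord.symm (r, θ)))
        = ∫ θ in Ioo (-Real.pi) Real.pi, ((r : ℂ) * f (r ^ 2)) *
            ((α - (r : ℂ) * Complex.exp (θ * Complex.I)) *
              (β - (r : ℂ) * (Complex.exp (θ * Complex.I))⁻¹))⁻¹ := by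
          refine setIntegral_congr_fun measurableSet_Ioo fun θ _ => ?_
          rw [hgval θ, Complex.real_smul]
          ring
      _ = ((r : ℂ) * f (r ^ 2)) * ∫ θ in Ioo (-Real.pi) Real.pi,
            ((α - (r : ℂ) * Complex.exp (θ * Complex.I)) *
              (β - (r : ℂ) * (Complex.exp (θ * Complex.I))⁻¹))⁻¹ := integral_const_mul _ _
      _ = T r := by
          rw [inner_int α β hα r hr0 hrα hrβ hd, hT]
  have hsubm : Ioo (0:ℝ) m ⊆ Ioi 0 := fun x hx => hx.1
  have hsubM : Ioi M ⊆ Ioi (0:ℝ) := fun x hx => lt_trans hM0 hx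
  have hae2 : T =ᵐ[volume.restrict (Ioi (0:ℝ))] fun r => G1 r - G2 r := by
    filter_upwards [hmem, hgood] with r hr hbad
    push_neg at hbad
    obtain ⟨hrα, hrβ, _⟩ := hbad
    have hr0 : (0:ℝ) < r := hr
    rcases lt_or_gt_of_ne hrα with h1 | h1 <;> rcases lt_or_gt_of_ne hrβ with h2 | h2
    · -- r < aα, r < aβ : below both
      have hmem1 : r ∈ Ioo (0:ℝ) m := ⟨hr0, lt_min h1 h2⟩
      have hmem2 : r ∉ Ioi M := not_lt.2 (le_trans (lt_min h1 h2).le hmM)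
      simp only [hT, hG1, hG2, hφ]
      rw [indicator_of_mem hmem1, indicator_of_notMem hmem2,
        if_pos h1, if_neg (not_lt.2 h2.le)]
      simp only [Complex.real_smul]
      push_cast
      ring
    · -- aβ < r < aα
      have hmem1 : r ∉ Ioo (0:ℝ) m := fun hh =>
        absurd hh.2 (not_lt.2 (le_trans (min_le_right _ _) h2.le))
      have hmem2 : r ∉ Ioi M := not_lt.2 (le_trans h1.le (le_max_left _ _))
      simp only [hT, hG1, hG2, hφ]
      rw [indicator_of_notMem hmem1, indicator_of_notMem hmem2, if_pos h1, if_pos h2]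
      simp
    · -- aα < r < aβ
      have hmem1 : r ∉ Ioo (0:ℝ) m := fun hh =>
        absurd hh.2 (not_lt.2 (le_trans (min_le_left _ _) h1.le))
      have hmem2 : r ∉ Ioi M := not_lt.2 (le_trans h2.le (le_max_right _ _))
      simp only [hT, hG1, hG2, hφ]
      rw [indicator_of_notMem hmem1, indicator_of_notMem hmem2,
        if_neg (not_lt.2 h1.le), if_neg (not_lt.2 h2.le)]
      simp
    · -- above both
      have hmem1 : r ∉ Ioo (0:ℝ) m := fun hh =>
        absurd hh.2 (not_lt.2 (le_trans (min_le_left _ _) h1.le))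
      have hmem2 : r ∈ Ioi M := max_lt h1 h2
      simp only [hT, hG1, hG2, hφ]
      rw [indicator_of_notMem hmem1, indicator_of_mem hmem2,
        if_neg (not_lt.2 h1.le), if_pos h2]
      simp only [Complex.real_smul]
      push_cast
      ring
  have hTint : Integrable T (volume.restrict (Ioi (0:ℝ))) := hinner_int.congr hae
  have hGint : Integrable (fun r => G1 r - G2 r) (volume.restrict (Ioi (0:ℝ))) :=
    hTint.congr hae2
  have hG1int : Integrable G1 (volume.restrict (Ioi (0:ℝ))) := by
    have hrepr : G1 = (Ioo (0:ℝ) m).indicator (fun r => G1 r - G2 r) := by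
      funext r
      by_cases hr : r ∈ Ioo (0:ℝ) m
      · rw [indicator_of_mem hr]
        have hG2z : G2 r = 0 := indicator_of_notMem
          (not_lt.2 (le_trans hr.2.le hmM)) _
        rw [hG2z, sub_zero]
      · rw [indicator_of_notMem hr, hG1, indicator_of_notMem hr]
    rw [hrepr]
    exact hGint.indicator measurableSet_Ioo
  have hG2int : Integrable G2 (volume.restrict (Ioi (0:ℝ))) := by
    have hrepr : G2 = (Ioi M).indicator (fun r => -(G1 r - G2 r)) := by
      funext r
      by_cases hr : r ∈ Ioi M
      · rw [indicator_of_mem hr]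
        have hG1z : G1 r = 0 := indicator_of_notMem
          (fun hh => absurd hh.2 (not_lt.2 (le_trans hmM hr.le))) _
        rw [hG1z, zero_sub, neg_neg]
      · rw [indicator_of_notMem hr, hG2, indicator_of_notMem hr]
    rw [hrepr]
    exact hGint.neg.indicator measurableSet_Ioi
  have e1 : (∫ r in Ioi (0:ℝ), G1 r) = (Real.pi : ℂ) * ∫ t in Ioo (0:ℝ) (m ^ 2), φ t := by
    rw [hG1, integral_indicator measurableSet_Ioo,
      Measure.restrict_restrict measurableSet_Ioo, inter_eq_left.mpr hsubm,
      integral_const_mul, ← sq_image_integral φ measurableSet_Ioo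
        (fun x hx => le_of_lt hx.1), sq_image_Ioo hm0]
  have e2 : (∫ r in Ioi (0:ℝ), G2 r) = (Real.pi : ℂ) * ∫ t in Ioi (M ^ 2), φ t := by
    rw [hG2, integral_indicator measurableSet_Ioi,
      Measure.restrict_restrict measurableSet_Ioi, inter_eq_left.mpr hsubM,
      integral_const_mul, ← sq_image_integral φ measurableSet_Ioi
        (fun x hx => le_of_lt (lt_trans hM0 hx)), sq_image_Ioi hM0.le]
  have hpolar' : (∫ r in Ioi (0:ℝ), ∫ θ in Ioo (-Real.pi) Real.pi,
      r • g (Complex.polarCoord.symm (r, θ))) = ∫ p : ℂ, g p := hpolar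
  rw [show (∫ z : ℂ, f (‖z‖ ^ 2) / ((α - z) * (β - starRingEnd ℂ z)))
      = ∫ p : ℂ, g p from rfl, ← hpolar', integral_congr_ae hae, integral_congr_ae hae2,
    integral_sub hG1int hG2int, e1, e2, integral_Ioc_eq_integral_Ioo]
  ring
end

section
/- The explicit self-convolution for the Muttalib–Borodin weight: with ω_MB(t) = (γ/Γ((δ+1)/γ)) t^δ e^{−t^γ} for γ > 0, δ > −1, the self-inverse-convoluted weight ω̂_MB(t) = (M[ω_MB](N))^{-1} ∫₀^∞ ω_MB(ty) ω_MB(y) y^N dy equals γ Γ((N+2δ+1)/γ) / (Γ((δ+N)/γ) Γ((δ+1)/γ)) · t^δ (1+t^γ)^{−(N+2δ+1)/γ}. -/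
open MeasureTheory Set

lemma key_integral {p b s : ℝ} (hp : 0 < p) (hb : 0 < b) (hs : -1 < s) :
    ∫ x in Ioi (0 : ℝ), x ^ s * Real.exp (-(b * x ^ p)) =
      (1 / b) ^ ((s + 1) / p) * Real.Gamma ((s + 1) / p) / p := by
  have hs1 : 0 < s + 1 := by linarith
  have hq : 0 < (s + 1) / p := by positivity
  rw [← Real.integral_rpow_mul_exp_neg_mul_Ioi hq hb, eq_div_iff hp.ne', mul_comm,
    ← smul_eq_mul, ← integral_smul,
    ← integral_comp_rpow_Ioi_of_pos (g := fun y => y ^ ((s + 1) / p - 1) * Real.exp (-(b * y))) hp]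
  refine setIntegral_congr_fun measurableSet_Ioi (fun x hx => ?_)
  have hx : (0:ℝ) < x := hx
  have h1 : p * ((s + 1) / p - 1) = s + 1 - p := by field_simp
  have h2 : p - 1 + (s + 1 - p) = s := by ring
  rw [smul_eq_mul, smul_eq_mul, ← Real.rpow_mul hx.le, h1, mul_assoc p,
    ← mul_assoc (x ^ (p - 1)), ← Real.rpow_add hx, h2]

/-- The Muttalib–Borodin weight of Laguerre type, `ω_MB(t) = (γ/Γ((δ+1)/γ)) t^δ e^{−t^γ}`. -/
noncomputable def mbWeight (γ δ : ℝ) : ℝ → ℝ := fun t =>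
  γ / Real.Gamma ((δ + 1) / γ) * t ^ δ * Real.exp (-(t ^ γ))

/-- Explicit self-convolution of the Muttalib–Borodin weight:
`ω̂_MB(t) = (M[ω_MB](N))⁻¹ ∫₀^∞ ω_MB(ty) ω_MB(y) y^N dy
 = γ Γ((N+2δ+1)/γ)/(Γ((δ+N)/γ) Γ((δ+1)/γ)) · t^δ (1+t^γ)^{−(N+2δ+1)/γ}`. -/
theorem mb_hat_weight (γ δ : ℝ) (hγ : 0 < γ) (hδ : -1 < δ) (N : ℕ) (hN : 1 ≤ N)
    (t : ℝ) (ht : 0 < t) :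
    (∫ y in Ioi (0 : ℝ), y ^ ((N : ℝ) - 1) * mbWeight γ δ y)⁻¹ *
        (∫ y in Ioi (0 : ℝ), mbWeight γ δ (t * y) * mbWeight γ δ y * y ^ (N : ℝ)) =
      γ * Real.Gamma (((N : ℝ) + 2 * δ + 1) / γ) /
          (Real.Gamma ((δ + (N : ℝ)) / γ) * Real.Gamma ((δ + 1) / γ)) *
        t ^ δ * (1 + t ^ γ) ^ (-((N : ℝ) + 2 * δ + 1) / γ) := by
  have hN1 : (1:ℝ) ≤ (N:ℝ) := by exact_mod_cast hN
  have hΓc : 0 < Real.Gamma ((δ + 1) / γ) := Real.Gamma_pos_of_pos (div_pos (by linarith) hγ)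
  have hΓN : 0 < Real.Gamma ((δ + (N:ℝ)) / γ) :=
    Real.Gamma_pos_of_pos (div_pos (by linarith) hγ)
  have hb : 0 < 1 + t ^ γ := by positivity
  set c := γ / Real.Gamma ((δ + 1) / γ) with hc
  have e1 : ∀ y ∈ Ioi (0:ℝ), y ^ ((N:ℝ) - 1) * mbWeight γ δ y
      = c * (y ^ ((N:ℝ) - 1 + δ) * Real.exp (-(1 * y ^ γ))) := by
    intro y hy
    have hy : (0:ℝ) < y := hy
    simp only [mbWeight, one_mul]
    rw [Real.rpow_add hy]; ring
  have e2 : ∀ y ∈ Ioi (0:ℝ), mbWeight γ δ (t * y) * mbWeight γ δ y * y ^ (N:ℝ)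
      = c ^ 2 * t ^ δ * (y ^ ((N:ℝ) + 2 * δ) * Real.exp (-((1 + t ^ γ) * y ^ γ))) := by
    intro y hy
    have hy : (0:ℝ) < y := hy
    simp only [mbWeight]
    rw [Real.mul_rpow ht.le hy.le, Real.mul_rpow ht.le hy.le,
      show (N:ℝ) + 2 * δ = δ + δ + N by ring, Real.rpow_add hy, Real.rpow_add hy,
      show -((1 + t ^ γ) * y ^ γ) = -(t ^ γ * y ^ γ) + -(y ^ γ) by ring, Real.exp_add]
    ring
  rw [setIntegral_congr_fun measurableSet_Ioi e1, setIntegral_congr_fun measurableSet_Ioi e2,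
    integral_const_mul, integral_const_mul,
    key_integral hγ one_pos (by linarith),
    key_integral hγ hb (by linarith),
    show ((N:ℝ) - 1 + δ + 1) / γ = (δ + (N:ℝ)) / γ by ring_nf,
    show ((N:ℝ) + 2 * δ + 1) / γ = (((N:ℝ)) + 2 * δ + 1) / γ from rfl]
  rw [one_div, one_div, Real.inv_rpow hb.le, ← Real.rpow_neg hb.le, inv_one, Real.one_rpow,
    one_mul, neg_div]
  have hΓ2 : 0 < Real.Gamma (((N:ℝ) + 2 * δ + 1) / γ) :=
    Real.Gamma_pos_of_pos (div_pos (by linarith) hγ)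
  rw [hc]
  field_simp
end

section
/- Mellin transform of the self-convoluted Muttalib–Borodin weight: for ω̂_MB(t) = C t^δ (1+t^γ)^{−(N+2δ+1)/γ} with C = γ Γ((N+2δ+1)/γ)/(Γ((δ+N)/γ) Γ((δ+1)/γ)), one has M[ω̂_MB](z) = Γ((δ+z)/γ) Γ((N+δ+1−z)/γ) / (Γ((δ+1)/γ) Γ((N+δ)/γ)) for −δ < Re(z) < N + δ + 1. -/
open MeasureTheory Set

open Complex in

lemma beta_Ioi (u v : ℂ) (hu : 0 < u.re) (hv : 0 < v.re) :
    ∫ t in Ioi (0:ℝ), (t:ℂ) ^ (u - 1) * ((1 + t : ℝ) : ℂ) ^ (-(u + v)) =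
      Complex.Gamma u * Complex.Gamma v / Complex.Gamma (u + v) := by
  -- change of variables x ↦ x / (1 - x), Ioo 0 1 → Ioi 0
  have himg : (fun x : ℝ => x / (1 - x)) '' Ioo 0 1 = Ioi 0 := by
    ext t
    constructor
    · rintro ⟨x, ⟨hx0, hx1⟩, rfl⟩
      exact div_pos hx0 (by linarith)
    · intro ht
      refine ⟨t / (1 + t), ⟨div_pos ht (by linarith [mem_Ioi.mp ht]), ?_⟩, ?_⟩
      · rw [div_lt_one (by linarith [mem_Ioi.mp ht])]; linarith [mem_Ioi.mp ht]
      · have h1t : (1:ℝ) + t ≠ 0 := by have := mem_Ioi.mp ht; positivity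
        field_simp
        ring
  have hderiv : ∀ x ∈ Ioo (0:ℝ) 1, HasDerivWithinAt (fun x : ℝ => x / (1 - x))
      (((1 - x) ^ 2)⁻¹) (Ioo 0 1) x := by
    intro x hx
    have hx1 : (1:ℝ) - x ≠ 0 := by have := hx.2; intro h; linarith [sub_eq_zero.mp h]
    have := (hasDerivAt_id x).div ((hasDerivAt_const x (1:ℝ)).sub (hasDerivAt_id x)) hx1
    have H := this.hasDerivWithinAt (s := Ioo 0 1)
    simp only [id] at H
    refine HasDerivWithinAt.congr_deriv H ?_
    show (1 * (1 - x) - x * (0 - 1)) / (1 - x) ^ 2 = ((1 - x) ^ 2)⁻¹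
    ring
  have hinj : InjOn (fun x : ℝ => x / (1 - x)) (Ioo 0 1) := by
    intro x hx y hy h
    have hx1 : (1:ℝ) - x ≠ 0 := by have := hx.2; intro hh; linarith [sub_eq_zero.mp hh]
    have hy1 : (1:ℝ) - y ≠ 0 := by have := hy.2; intro hh; linarith [sub_eq_zero.mp hh]
    field_simp at h
    linarith
  have key := integral_image_eq_integral_abs_deriv_smul measurableSet_Ioo hderiv hinj
    (fun t : ℝ => (t:ℂ) ^ (u - 1) * ((1 + t : ℝ) : ℂ) ^ (-(u + v)))
  rw [himg] at key
  rw [key]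
  -- now compute the Ioo integral and identify with betaIntegral
  have hGne : Complex.Gamma (u + v) ≠ 0 :=
    Complex.Gamma_ne_zero_of_re_pos (by simp only [add_re]; linarith)
  rw [eq_div_iff hGne, Complex.Gamma_mul_Gamma_eq_betaIntegral hu hv, mul_comm]
  congr 1
  rw [Complex.betaIntegral, intervalIntegral.integral_of_le zero_le_one,
    integral_Ioc_eq_integral_Ioo]
  refine setIntegral_congr_fun measurableSet_Ioo fun x hx => ?_
  obtain ⟨hx0, hx1⟩ := hx
  have h1x : (0:ℝ) < 1 - x := by linarith
  have h1xne : ((1:ℂ) - x) ≠ 0 := by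
    rw [show ((1:ℂ) - x) = ((1 - x : ℝ) : ℂ) by push_cast; ring]
    exact_mod_cast h1x.ne'
  have harg : ((1:ℂ) - x).arg ≠ Real.pi := by
    rw [show ((1:ℂ) - x) = ((1 - x : ℝ) : ℂ) by push_cast; ring,
      Complex.arg_ofReal_of_nonneg h1x.le]
    exact (Real.pi_ne_zero).symm
  have e1 : ((x / (1 - x) : ℝ) : ℂ) ^ (u - 1)
      = (x:ℂ) ^ (u - 1) * ((1:ℂ) - x) ^ (-(u - 1)) := by
    rw [div_eq_mul_inv, Complex.ofReal_mul, Complex.mul_cpow_ofReal_nonneg hx0.le (inv_nonneg.mpr h1x.le),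
      Complex.ofReal_inv, Complex.inv_cpow _ _ (by rwa [show ((1-x:ℝ):ℂ) = 1 - (x:ℂ) by push_cast; ring]),
      ← Complex.cpow_neg]
    push_cast
    ring_nf
  have e2 : ((1 + x / (1 - x) : ℝ) : ℂ) ^ (-(u + v)) = ((1:ℂ) - x) ^ (u + v) := by
    have : (1 + x / (1 - x) : ℝ) = (1 - x)⁻¹ := by field_simp; ring
    rw [this, Complex.ofReal_inv, Complex.inv_cpow _ _ (by rwa [show ((1-x:ℝ):ℂ) = 1 - (x:ℂ) by push_cast; ring]),
      ← Complex.cpow_neg, neg_neg]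
    push_cast
    ring_nf
  have e3 : ((|((1 - x : ℝ) ^ 2)⁻¹| : ℝ) : ℂ) = ((1:ℂ) - x) ^ (-2 : ℂ) := by
    rw [abs_of_pos (by positivity)]
    push_cast
    rw [show ((-2:ℂ)) = ((-2 : ℤ) : ℂ) by norm_num, Complex.cpow_intCast]
    rw [zpow_neg]
    norm_num
  have e4 : ((1:ℂ)-x)^(-(u-1)) * ((1:ℂ)-x)^(u+v) * ((1:ℂ)-x)^(-2:ℂ)
      = ((1:ℂ)-x)^(v-1) := by
    rw [← Complex.cpow_add _ _ h1xne, ← Complex.cpow_add _ _ h1xne]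
    congr 1
    ring
  rw [real_smul, e3, e1, e2, ← e4]
  ring

open Complex in
lemma beta_Ioi_rpow (γ : ℝ) (hγ : 0 < γ) (u v : ℂ) (hu : 0 < u.re) (hv : 0 < v.re) :
    ∫ t in Ioi (0:ℝ), (t:ℂ) ^ ((γ:ℂ) * u - 1) * ((1 + t ^ γ : ℝ) : ℂ) ^ (-(u + v)) =
      Complex.Gamma u * Complex.Gamma v / ((γ:ℂ) * Complex.Gamma (u + v)) := by
  have hγ' : (γ:ℂ) ≠ 0 := Complex.ofReal_ne_zero.mpr hγ.ne'
  have h := mellin_comp_rpow (E := ℂ)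
    (fun y : ℝ => ((1 + y : ℝ) : ℂ) ^ (-(u + v))) ((γ:ℂ) * u) γ
  simp only [mellin, smul_eq_mul] at h
  rw [show (γ:ℂ) * u / (γ:ℂ) = u by field_simp] at h
  rw [h, beta_Ioi u v hu hv, abs_of_pos hγ]
  rw [real_smul, ofReal_inv]
  field_simp

/-- Mellin transform of the self-convoluted Muttalib–Borodin weight:
for `ω̂_MB(t) = C t^δ (1+t^γ)^{−(N+2δ+1)/γ}` with
`C = γ Γ((N+2δ+1)/γ)/(Γ((δ+N)/γ) Γ((δ+1)/γ))`, one has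
`M[ω̂_MB](z) = Γ((δ+z)/γ) Γ((N+δ+1−z)/γ) / (Γ((δ+1)/γ) Γ((N+δ)/γ))`
for `−δ < Re z < N + δ + 1`. -/
theorem mb_hat_mellin (γ δ : ℝ) (hγ : 0 < γ) (hδ : -1 < δ) (N : ℕ) (hN : 1 ≤ N)
    (z : ℂ) (h1 : -δ < z.re) (h2 : z.re < (N : ℝ) + δ + 1) :
    ∫ t in Ioi (0 : ℝ), (t : ℂ) ^ (z - 1) *
        (((γ * Real.Gamma (((N : ℝ) + 2 * δ + 1) / γ) /
            (Real.Gamma ((δ + (N : ℝ)) / γ) * Real.Gamma ((δ + 1) / γ)) *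
          (t ^ δ * (1 + t ^ γ) ^ (-((N : ℝ) + 2 * δ + 1) / γ)) : ℝ)) : ℂ) =
      Complex.Gamma (((δ : ℂ) + z) / (γ : ℂ)) *
          Complex.Gamma (((N : ℂ) + (δ : ℂ) + 1 - z) / (γ : ℂ)) /
        (Complex.Gamma (((δ + 1) / γ : ℝ) : ℂ) *
          Complex.Gamma ((((N : ℝ) + δ) / γ : ℝ) : ℂ)) := by
  have hγ' : (γ:ℂ) ≠ 0 := Complex.ofReal_ne_zero.mpr hγ.ne'
  have hN1 : (1:ℝ) ≤ (N:ℝ) := by exact_mod_cast hN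
  set b : ℝ := ((N : ℝ) + 2 * δ + 1) / γ with hb
  set C : ℝ := γ * Real.Gamma b /
      (Real.Gamma ((δ + (N : ℝ)) / γ) * Real.Gamma ((δ + 1) / γ)) with hC
  set u : ℂ := ((δ : ℂ) + z) / (γ : ℂ) with hu_def
  set v : ℂ := ((N : ℂ) + (δ : ℂ) + 1 - z) / (γ : ℂ) with hv_def
  have hu : 0 < u.re := by
    rw [hu_def, Complex.div_ofReal_re]
    have : ((δ:ℂ) + z).re = δ + z.re := by simp
    rw [this]
    exact div_pos (by linarith) hγ
  have hv : 0 < v.re := by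
    rw [hv_def, Complex.div_ofReal_re]
    have : ((N : ℂ) + (δ:ℂ) + 1 - z).re = (N:ℝ) + δ + 1 - z.re := by simp
    rw [this]
    exact div_pos (by linarith) hγ
  have huv : u + v = ((b:ℝ):ℂ) := by
    rw [hu_def, hv_def, hb]
    push_cast
    field_simp
    ring
  have hgu : (γ:ℂ) * u = (δ:ℂ) + z := by
    rw [hu_def]; field_simp
  have step : ∫ t in Ioi (0 : ℝ), (t : ℂ) ^ (z - 1) *
        ((C * (t ^ δ * (1 + t ^ γ) ^ (-((N : ℝ) + 2 * δ + 1) / γ)) : ℝ) : ℂ)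
      = (C:ℂ) * ∫ t in Ioi (0:ℝ),
          (t:ℂ) ^ ((γ:ℂ) * u - 1) * ((1 + t ^ γ : ℝ) : ℂ) ^ (-(u + v)) := by
    rw [← integral_const_mul]
    refine setIntegral_congr_fun measurableSet_Ioi fun t ht => ?_
    have ht0 : (0:ℝ) < t := ht
    have htne : (t:ℂ) ≠ 0 := Complex.ofReal_ne_zero.mpr ht0.ne'
    have h1tγ : (0:ℝ) < 1 + t ^ γ := by positivity
    have e1 : ((t ^ δ : ℝ) : ℂ) = (t:ℂ) ^ (δ:ℂ) := Complex.ofReal_cpow ht0.le δ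
    have e2 : (((1 + t ^ γ) ^ (-((N : ℝ) + 2 * δ + 1) / γ) : ℝ) : ℂ)
        = ((1 + t ^ γ : ℝ) : ℂ) ^ (-(u + v)) := by
      rw [show (-((N:ℝ) + 2 * δ + 1) / γ) = -b by rw [hb, neg_div],
        Complex.ofReal_cpow h1tγ.le, huv, Complex.ofReal_neg]
    have e3 : (t:ℂ) ^ (z - 1) * (t:ℂ) ^ (δ:ℂ) = (t:ℂ) ^ ((γ:ℂ) * u - 1) := by
      rw [← Complex.cpow_add _ _ htne, hgu]
      congr 1
      ring
    push_cast [e1, e2]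
    rw [← e3]
    ring
  rw [step, beta_Ioi_rpow γ hγ u v hu hv, huv]
  have hbpos : 0 < b := by
    apply div_pos _ hγ; linarith
  have hGb : Real.Gamma b ≠ 0 := (Real.Gamma_pos_of_pos hbpos).ne'
  have hG1 : Real.Gamma ((δ + 1) / γ) ≠ 0 :=
    (Real.Gamma_pos_of_pos (div_pos (by linarith) hγ)).ne'
  have hG2 : Real.Gamma ((δ + (N:ℝ)) / γ) ≠ 0 :=
    (Real.Gamma_pos_of_pos (div_pos (by linarith) hγ)).ne'
  have hcomm : ((N:ℝ) + δ) / γ = (δ + (N:ℝ)) / γ := by ring_nf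
  have hGb' : ((Real.Gamma b : ℝ):ℂ) ≠ 0 := Complex.ofReal_ne_zero.mpr hGb
  have hG1' : ((Real.Gamma ((δ + 1) / γ) : ℝ):ℂ) ≠ 0 := Complex.ofReal_ne_zero.mpr hG1
  have hG2' : ((Real.Gamma ((δ + (N:ℝ)) / γ) : ℝ):ℂ) ≠ 0 := Complex.ofReal_ne_zero.mpr hG2
  rw [Complex.Gamma_ofReal, Complex.Gamma_ofReal, Complex.Gamma_ofReal, hcomm, hC,
    Complex.ofReal_div, Complex.ofReal_mul, Complex.ofReal_mul]
  field_simp [hγ', hGb', hG1', hG2']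
end

section
/- Existence of the partition-function integral: let ω : ℝ₊ → ℝ₊ be positive, continuous and integrable with ∫_ℂ |z|^j ω(|z|²) d²z < ∞ for all 0 ≤ j ≤ 2N−2, and such that near any singular point t₀ ≥ 0, ω(t) ≤ c|t − t₀|^{−α} with α ∈ [0,1). Let α₁,...,α_m ∈ ℂ and β₁,...,β_m pairwise distinct nonzero complex numbers. Then ∫_{ℂ^N} |Δ_N(z)|² ∏_{j=1}^N ( ω(|z_j|²) ∏_{ℓ=1}^m |(z_j − α_ℓ)/(z_j − β_ℓ)| ) d²z < ∞. -/
open MeasureTheory Set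
open scoped ENNReal NNReal

lemma pf_integrableOn_inv_norm_ball (β : ℂ) {r : ℝ} (hr : 0 < r) :
    IntegrableOn (fun z : ℂ => ‖z - β‖⁻¹) (Metric.ball β r) := by
  constructor
  · exact ((measurable_id.sub_const β).norm.inv).aestronglyMeasurable
  · rw [hasFiniteIntegral_iff_ofReal (Filter.Eventually.of_forall fun z => inv_nonneg.2 (norm_nonneg _))]
    set A : ℕ → Set ℂ := fun k =>
      Metric.ball β (r * (2:ℝ)⁻¹ ^ k) \ Metric.ball β (r * (2:ℝ)⁻¹ ^ (k+1)) with hA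
    have hcover : Metric.ball β r ⊆ {β} ∪ ⋃ k, A k := by
      intro z hz
      rcases eq_or_ne z β with h | h
      · exact Or.inl (by simp [h])
      · right
        have hd : 0 < dist z β := dist_pos.2 h
        have hP : ∃ k : ℕ, r * (2:ℝ)⁻¹ ^ (k+1) ≤ dist z β := by
          obtain ⟨k, hk⟩ := exists_pow_lt_of_lt_one (div_pos hd hr) (by norm_num : (2:ℝ)⁻¹ < 1)
          refine ⟨k, ?_⟩
          have : r * (2:ℝ)⁻¹ ^ (k+1) ≤ r * (2:ℝ)⁻¹ ^ k := by
            apply mul_le_mul_of_nonneg_left _ hr.le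
            apply pow_le_pow_of_le_one (by norm_num) (by norm_num)
            omega
          calc r * (2:ℝ)⁻¹ ^ (k+1) ≤ r * (2:ℝ)⁻¹ ^ k := this
            _ ≤ r * (dist z β / r) := by nlinarith [hk.le]
            _ = dist z β := by field_simp
        classical
        set k := Nat.find hP with hk
        refine mem_iUnion.2 ⟨k, ?_, ?_⟩
        · -- z ∈ ball β (r * 2⁻¹ ^ k)
          rcases Nat.eq_zero_or_pos k with h0 | h0
          · simpa [h0] using hz
          · have := Nat.find_min hP (m := k - 1) (by omega)
            push_neg at this
            have hk1 : k - 1 + 1 = k := by omega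
            rw [hk1] at this
            exact Metric.mem_ball.2 (by rwa [dist_comm] at this ⊢)
        · intro hmem
          have := Nat.find_spec hP
          rw [Metric.mem_ball] at hmem
          rw [← hk] at this
          linarith
      done
    calc ∫⁻ z in Metric.ball β r, ENNReal.ofReal ‖z - β‖⁻¹
        ≤ ∫⁻ z in ({β} ∪ ⋃ k, A k), ENNReal.ofReal ‖z - β‖⁻¹ :=
          lintegral_mono_set hcover
      _ ≤ (∫⁻ z in {β}, ENNReal.ofReal ‖z - β‖⁻¹) +
          ∫⁻ z in ⋃ k, A k, ENNReal.ofReal ‖z - β‖⁻¹ := lintegral_union_le _ _ _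
      _ ≤ 0 + ∑' k, ∫⁻ z in A k, ENNReal.ofReal ‖z - β‖⁻¹ := by
          gcongr
          · rw [setLIntegral_measure_zero _ _ (measure_singleton β)]
          · exact lintegral_iUnion_le _ _
      _ = ∑' k, ∫⁻ z in A k, ENNReal.ofReal ‖z - β‖⁻¹ := by rw [zero_add]
      _ ≤ ∑' k, ENNReal.ofReal (2 * r * Real.pi) * ENNReal.ofReal 2⁻¹ ^ k := by
          gcongr with k
          have hb : ∀ z ∈ A k, ENNReal.ofReal ‖z - β‖⁻¹ ≤
              ENNReal.ofReal (r * (2:ℝ)⁻¹ ^ (k+1))⁻¹ := by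
            intro z hz
            apply ENNReal.ofReal_le_ofReal
            apply inv_anti₀ (by positivity)
            have := hz.2
            rw [Metric.mem_ball, not_lt, dist_comm] at this
            simpa [dist_eq_norm, norm_sub_rev] using this
          calc ∫⁻ z in A k, ENNReal.ofReal ‖z - β‖⁻¹
              ≤ ∫⁻ _ in A k, ENNReal.ofReal (r * (2:ℝ)⁻¹ ^ (k+1))⁻¹ := by
                apply setLIntegral_mono' (measurableSet_ball.diff measurableSet_ball) hb
            _ = ENNReal.ofReal (r * (2:ℝ)⁻¹ ^ (k+1))⁻¹ * volume (A k) := by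
                rw [setLIntegral_const]
            _ ≤ ENNReal.ofReal (r * (2:ℝ)⁻¹ ^ (k+1))⁻¹ *
                  volume (Metric.ball β (r * (2:ℝ)⁻¹ ^ k)) := by
                gcongr
                exact diff_subset
            _ ≤ ENNReal.ofReal (2 * r * Real.pi) * ENNReal.ofReal 2⁻¹ ^ k := by
                rw [Complex.volume_ball,
                  (show ((NNReal.pi : ℝ≥0∞)) = ENNReal.ofReal Real.pi by
                    rw [← NNReal.coe_real_pi, ENNReal.ofReal_coe_nnreal]),
                  ← ENNReal.ofReal_pow (mul_nonneg hr.le (by positivity)),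
                  ← ENNReal.ofReal_mul (by positivity),
                  ← ENNReal.ofReal_mul (inv_nonneg.2 (mul_nonneg hr.le (by positivity))),
                  ← ENNReal.ofReal_pow (by norm_num : (0:ℝ) ≤ 2⁻¹),
                  ← ENNReal.ofReal_mul (mul_nonneg (mul_nonneg (by norm_num) hr.le)
                    Real.pi_pos.le)]
                apply ENNReal.ofReal_le_ofReal
                have h2 : (0:ℝ) < (2:ℝ)⁻¹ ^ k := by positivity
                have heq : (r * (2:ℝ)⁻¹ ^ (k + 1))⁻¹ * ((r * (2:ℝ)⁻¹ ^ k) ^ 2 * Real.pi)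
                    = 2 * r * Real.pi * (2:ℝ)⁻¹ ^ k := by
                  rw [pow_succ]
                  field_simp
                rw [heq]
      _ < ⊤ := by
          rw [ENNReal.tsum_mul_left, ENNReal.tsum_geometric]
          apply ENNReal.mul_lt_top ENNReal.ofReal_lt_top
          rw [(show ENNReal.ofReal 2⁻¹ = (2:ℝ≥0∞)⁻¹ by
                rw [ENNReal.ofReal_inv_of_pos two_pos, ENNReal.ofReal_ofNat]),
              ENNReal.one_sub_inv_two, inv_inv]
          exact ENNReal.ofNat_lt_top


-- binomial expansion: (1+|z|)^n * |ω(|z|²)| is integrable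
lemma pf_h_integrable (ω : ℝ → ℝ) (n : ℕ)
    (hmom : ∀ j : ℕ, j ≤ n →
      Integrable (fun z : ℂ => ‖z‖ ^ j * ω (‖z‖ ^ 2))) :
    Integrable (fun z : ℂ => (1 + ‖z‖) ^ n * |ω (‖z‖ ^ 2)|) := by
  have hpt : ∀ z : ℂ, (1 + ‖z‖) ^ n * |ω (‖z‖ ^ 2)| =
      ∑ j ∈ Finset.range (n + 1),
        (n.choose j : ℝ) * |‖z‖ ^ (n - j) * ω (‖z‖ ^ 2)| := by
    intro z
    rw [add_pow, Finset.sum_mul]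
    apply Finset.sum_congr rfl
    intro j hj
    rw [abs_mul, abs_of_nonneg (pow_nonneg (norm_nonneg z) _), one_pow, one_mul]
    ring
  simp_rw [hpt]
  apply integrable_finset_sum
  intro j hj
  exact ((hmom (n - j) (by omega)).abs).const_mul _

lemma pf_g_integrable (ω : ℝ → ℝ) (n m : ℕ)
    (hcont : ContinuousOn ω (Ioi 0)) (hmeas : Measurable ω)
    (hmom : ∀ j : ℕ, j ≤ n →
      Integrable (fun z : ℂ => ‖z‖ ^ j * ω (‖z‖ ^ 2)))
    (αv βv : Fin m → ℂ) (hβne : ∀ ℓ, βv ℓ ≠ 0) (hβdist : Function.Injective βv) :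
    Integrable (fun z : ℂ => (1 + ‖z‖) ^ n * |ω (‖z‖ ^ 2)| *
      ∏ ℓ : Fin m, ‖(z - αv ℓ) / (z - βv ℓ)‖) := by
  classical
  set h : ℂ → ℝ := fun z => (1 + ‖z‖) ^ n * |ω (‖z‖ ^ 2)| with hh
  set R : ℂ → ℝ := fun z => ∏ ℓ : Fin m, ‖(z - αv ℓ) / (z - βv ℓ)‖ with hR
  have hRnn : ∀ z, 0 ≤ R z := fun z =>
    Finset.prod_nonneg fun ℓ _ => norm_nonneg _
  have hhnn : ∀ z, 0 ≤ h z := fun z =>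
    mul_nonneg (pow_nonneg (by positivity) _) (abs_nonneg _)
  have hInt : Integrable h := pf_h_integrable ω n hmom
  -- measurability of everything
  have hmR : Measurable R := by
    apply Finset.measurable_prod
    intro ℓ _
    exact continuous_norm.measurable.comp
      ((measurable_id.sub_const (αv ℓ)).div (measurable_id.sub_const (βv ℓ)))
  have hmh : Measurable h := by
    apply Measurable.mul
    · exact ((continuous_const.add continuous_norm).pow n).measurable
    · exact (hmeas.comp ((continuous_norm.pow 2).measurable)).abs
  have hmg : Measurable (fun z => h z * R z) := hmh.mul hmR
  -- the radii
  set δ : Fin m → ℝ := fun ℓ =>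
    ((insert ‖βv ℓ‖ ((Finset.univ.erase ℓ).image fun ℓ' => dist (βv ℓ) (βv ℓ'))).min'
      (Finset.insert_nonempty _ _)) / 2 with hδ
  have hδpos : ∀ ℓ, 0 < δ ℓ := by
    intro ℓ
    apply div_pos _ two_pos
    rw [Finset.lt_min'_iff]
    intro x hx
    rcases Finset.mem_insert.1 hx with rfl | hx
    · exact norm_pos_iff.2 (hβne ℓ)
    · obtain ⟨ℓ', hℓ', rfl⟩ := Finset.mem_image.1 hx
      exact dist_pos.2 fun hc => (Finset.mem_erase.1 hℓ').1 (hβdist hc.symm) |>.elim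
  have hδeq : ∀ ℓ, δ ℓ = ((insert ‖βv ℓ‖
      ((Finset.univ.erase ℓ).image fun ℓ' => dist (βv ℓ) (βv ℓ'))).min'
      (Finset.insert_nonempty _ _)) / 2 := fun ℓ => rfl
  have hδβ : ∀ ℓ, 2 * δ ℓ ≤ ‖βv ℓ‖ := by
    intro ℓ
    have h1 := Finset.min'_le (insert ‖βv ℓ‖
      ((Finset.univ.erase ℓ).image fun ℓ' => dist (βv ℓ) (βv ℓ')))
      ‖βv ℓ‖ (Finset.mem_insert_self _ _)
    rw [hδeq ℓ]; linarith
  have hδd : ∀ ℓ ℓ', ℓ' ≠ ℓ → 2 * δ ℓ ≤ dist (βv ℓ) (βv ℓ') := by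
    intro ℓ ℓ' hne
    have h1 := Finset.min'_le (insert ‖βv ℓ‖
      ((Finset.univ.erase ℓ).image fun ℓ' => dist (βv ℓ) (βv ℓ')))
      (dist (βv ℓ) (βv ℓ'))
      (Finset.mem_insert_of_mem (Finset.mem_image_of_mem _
        (Finset.mem_erase.2 ⟨hne, Finset.mem_univ _⟩)))
    rw [hδeq ℓ]; linarith
  -- split the plane
  set S : Set ℂ := ⋃ ℓ, Metric.ball (βv ℓ) (δ ℓ) with hS
  have hSmeas : MeasurableSet S :=
    MeasurableSet.iUnion fun ℓ => measurableSet_ball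
  rw [← integrableOn_univ, (by simp : (univ : Set ℂ) = Sᶜ ∪ S)]
  apply IntegrableOn.union
  · -- on the complement, the ratio is bounded
    set C : ℝ := ∏ ℓ : Fin m, (1 + dist (αv ℓ) (βv ℓ) / δ ℓ) with hC
    have hbound : ∀ z ∈ Sᶜ, R z ≤ C := by
      intro z hz
      rw [mem_compl_iff, hS, mem_iUnion] at hz
      push_neg at hz
      apply Finset.prod_le_prod (fun ℓ _ => norm_nonneg _)
      intro ℓ _
      have hzℓ : δ ℓ ≤ ‖z - βv ℓ‖ := by
        have := hz ℓ
        rw [Metric.mem_ball, not_lt, Complex.dist_eq] at this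
        exact this
      have hzpos : (0:ℝ) < ‖z - βv ℓ‖ := lt_of_lt_of_le (hδpos ℓ) hzℓ
      rw [norm_div, div_le_iff₀ hzpos]
      have h1 : ‖z - αv ℓ‖ ≤ ‖z - βv ℓ‖ + dist (αv ℓ) (βv ℓ) := by
        have he : z - αv ℓ = (z - βv ℓ) + (βv ℓ - αv ℓ) := by ring
        rw [he]
        refine (norm_add_le _ _).trans ?_
        rw [dist_comm, Complex.dist_eq]
      calc ‖z - αv ℓ‖ ≤ ‖z - βv ℓ‖ + dist (αv ℓ) (βv ℓ) := h1
        _ ≤ (1 + dist (αv ℓ) (βv ℓ) / δ ℓ) * ‖z - βv ℓ‖ := by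
            have h2 : dist (αv ℓ) (βv ℓ) ≤ dist (αv ℓ) (βv ℓ) / δ ℓ * ‖z - βv ℓ‖ := by
              rw [div_mul_eq_mul_div, le_div_iff₀ (hδpos ℓ)]
              apply mul_le_mul_of_nonneg_left hzℓ dist_nonneg
            nlinarith
    apply Integrable.mono (hInt.const_mul C).integrableOn
      (hmg.aestronglyMeasurable.restrict)
    apply ae_restrict_of_forall_mem hSmeas.compl
    intro z hz
    have : h z * R z ≤ C * h z := by
      calc h z * R z ≤ h z * C := mul_le_mul_of_nonneg_left (hbound z hz) (hhnn z)
        _ = C * h z := mul_comm _ _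
    rw [Real.norm_eq_abs, Real.norm_eq_abs, abs_of_nonneg (mul_nonneg (hhnn z) (hRnn z))]
    exact this.trans (le_abs_self _)
  · -- near each βv ℓ
    apply (integrableOn_finite_iUnion).2
    intro ℓ
    set F : ℂ → ℝ := fun z => h z * (∏ ℓ' : Fin m, ‖z - αv ℓ'‖) *
      ∏ ℓ' ∈ Finset.univ.erase ℓ, (‖z - βv ℓ'‖)⁻¹ with hF
    have hfact : ∀ z, h z * R z = F z * (‖z - βv ℓ‖)⁻¹ := by
      intro z
      have e1 : (∏ ℓ' : Fin m, ‖(z - αv ℓ') / (z - βv ℓ')‖) =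
          (∏ ℓ' : Fin m, ‖z - αv ℓ'‖) *
            ∏ ℓ' : Fin m, (‖z - βv ℓ'‖)⁻¹ := by
        rw [← Finset.prod_mul_distrib]
        apply Finset.prod_congr rfl
        intro ℓ' _
        rw [norm_div, div_eq_mul_inv]
      have e2 : (∏ ℓ' : Fin m, (‖z - βv ℓ'‖)⁻¹) =
          (‖z - βv ℓ‖)⁻¹ *
            ∏ ℓ' ∈ Finset.univ.erase ℓ, (‖z - βv ℓ'‖)⁻¹ :=
        (Finset.mul_prod_erase Finset.univ _ (Finset.mem_univ ℓ)).symm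
      rw [hF, hR]
      simp only []
      rw [e1, e2]
      ring
    have hK : IsCompact (Metric.closedBall (βv ℓ) (δ ℓ)) := isCompact_closedBall _ _
    have hFc : ContinuousOn F (Metric.closedBall (βv ℓ) (δ ℓ)) := by
      apply ContinuousOn.mul
      · apply ContinuousOn.mul
        · apply ContinuousOn.mul
          · exact ((continuous_const.add continuous_norm).pow n).continuousOn
          · apply ContinuousOn.abs
            apply hcont.comp (continuous_norm.pow 2).continuousOn
            intro z hz
            rw [mem_Ioi]
            have hz' : ‖z - βv ℓ‖ ≤ δ ℓ := by
              rwa [Metric.mem_closedBall, dist_eq_norm] at hz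
            have h3 := norm_sub_norm_le (βv ℓ) z
            have h4 : ‖βv ℓ - z‖ = ‖z - βv ℓ‖ := norm_sub_rev _ _
            have h5 := hδβ ℓ
            have h6 := hδpos ℓ
            have hzpos : (0:ℝ) < ‖z‖ := by
              linarith
            exact pow_pos hzpos 2
        · exact (continuous_finset_prod _ fun ℓ' _ =>
            continuous_norm.comp (continuous_id.sub continuous_const)).continuousOn
      · apply continuousOn_finset_prod
        intro ℓ' hℓ'
        apply ContinuousOn.inv₀
        · exact (continuous_norm.comp (continuous_id.sub continuous_const)).continuousOn
        · intro z hz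
          have hne : ℓ' ≠ ℓ := (Finset.mem_erase.1 hℓ').1
          have h2 := hδd ℓ ℓ' hne
          have h3 : dist z (βv ℓ) ≤ δ ℓ := Metric.mem_closedBall.1 hz
          have h4 := dist_triangle (βv ℓ) z (βv ℓ')
          have h5 : dist (βv ℓ) z = dist z (βv ℓ) := dist_comm _ _
          have h6 : (0:ℝ) < dist z (βv ℓ') := by linarith [hδpos ℓ]
          rw [← Complex.dist_eq]
          exact ne_of_gt h6
    obtain ⟨M, hM⟩ := hK.exists_bound_of_continuousOn hFc
    apply Integrable.mono
      (((pf_integrableOn_inv_norm_ball (βv ℓ) (hδpos ℓ))).const_mul M)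
      hmg.aestronglyMeasurable.restrict
    apply ae_restrict_of_forall_mem measurableSet_ball
    intro z hz
    have hzK : z ∈ Metric.closedBall (βv ℓ) (δ ℓ) := Metric.ball_subset_closedBall hz
    have hMz : |F z| ≤ M := by rw [← Real.norm_eq_abs]; exact hM z hzK
    rw [Real.norm_eq_abs, Real.norm_eq_abs, hfact z]
    calc |F z * (‖z - βv ℓ‖)⁻¹|
        = |F z| * (‖z - βv ℓ‖)⁻¹ := by
          rw [abs_mul, abs_of_nonneg (inv_nonneg.2 (norm_nonneg _))]
      _ ≤ M * (‖z - βv ℓ‖)⁻¹ := by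
          apply mul_le_mul_of_nonneg_right hMz (inv_nonneg.2 (norm_nonneg _))
      _ ≤ |M * ‖z - βv ℓ‖⁻¹| := by
          exact le_abs_self _


lemma pf_prod_pair {Nn : ℕ} (a : Fin Nn → ℝ) :
    ∏ i : Fin Nn, ∏ j ∈ Finset.Ioi i, (a i * a j) = ∏ k : Fin Nn, a k ^ (Nn - 1) := by
  have e1 : ∏ i : Fin Nn, ∏ j ∈ Finset.Ioi i, (a i * a j)
      = (∏ i : Fin Nn, a i ^ (Nn - 1 - (i : ℕ))) * ∏ i : Fin Nn, ∏ j ∈ Finset.Ioi i, a j := by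
    rw [← Finset.prod_mul_distrib]
    apply Finset.prod_congr rfl
    intro i _
    rw [Finset.prod_mul_distrib, Finset.prod_const, Fin.card_Ioi]
  have e2 : (∏ i : Fin Nn, ∏ j ∈ Finset.Ioi i, a j)
      = ∏ j : Fin Nn, a j ^ (j : ℕ) := by
    rw [Finset.prod_comm' (t' := Finset.univ) (s' := fun j => Finset.Iio j)
      (by intro x y; simp [Finset.mem_Ioi, Finset.mem_Iio])]
    apply Finset.prod_congr rfl
    intro j _
    rw [Finset.prod_const, Fin.card_Iio]
  rw [e1, e2, ← Finset.prod_mul_distrib]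
  apply Finset.prod_congr rfl
  intro i _
  rw [← pow_add]
  congr 1
  have := i.isLt
  omega


/-- Existence of the partition-function integral: for a positive continuous integrable
weight `ω` on `(0,∞)` with finite moments up to order `2N−2` and at most integrable
power-law singularities, and characteristic points `α₁,…,α_m`, `β₁,…,β_m` (the `β`'s
pairwise distinct and nonzero), the integral
`∫_{ℂ^N} |Δ_N(z)|² ∏_j ω(|z_j|²) ∏_ℓ |(z_j − α_ℓ)/(z_j − β_ℓ)| d²z` is finite. -/
theorem partition_function_exists (ω : ℝ → ℝ) (N m : ℕ) (hN : 1 ≤ N)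
    (hcont : ContinuousOn ω (Ioi 0))
    (hpos : ∀ t ∈ Ioi (0 : ℝ), 0 < ω t)
    (hmeas : Measurable ω)
    (hω1 : IntegrableOn ω (Ioi 0))
    (hmom : ∀ j : ℕ, j ≤ 2 * N - 2 →
      Integrable (fun z : ℂ => ‖z‖ ^ j * ω (‖z‖ ^ 2)))
    (hsing : ∀ t₀ : ℝ, 0 ≤ t₀ → ∃ c > (0 : ℝ), ∃ a ∈ Ico (0 : ℝ) 1, ∃ ε > (0 : ℝ),
      ∀ t : ℝ, 0 < t → |t - t₀| < ε → t ≠ t₀ → ω t ≤ c * |t - t₀| ^ (-a))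
    (αv βv : Fin m → ℂ)
    (hβne : ∀ ℓ, βv ℓ ≠ 0) (hβdist : Function.Injective βv) :
    Integrable (fun z : Fin N → ℂ =>
      ‖∏ i : Fin N, ∏ j ∈ Finset.Ioi i, (z j - z i)‖ ^ 2 *
        ∏ j : Fin N, (ω (‖z j‖ ^ 2) *
          ∏ ℓ : Fin m, ‖(z j - αv ℓ) / (z j - βv ℓ)‖)) := by
  classical
  set n := 2 * N - 2 with hn
  set g : ℂ → ℝ := fun z => (1 + ‖z‖) ^ n * |ω (‖z‖ ^ 2)| *
      ∏ ℓ : Fin m, ‖(z - αv ℓ) / (z - βv ℓ)‖ with hg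
  have hgInt : Integrable g :=
    pf_g_integrable ω n m hcont hmeas hmom αv βv hβne hβdist
  have hG : Integrable (fun z : Fin N → ℂ => ∏ j : Fin N, g (z j)) :=
    Integrable.fintype_prod (𝕜 := ℝ) (f := fun _ : Fin N => g) (fun _ => hgInt)
  apply Integrable.mono hG
  · -- measurability
    apply Measurable.aestronglyMeasurable
    apply Measurable.mul
    · apply Measurable.pow_const
      apply continuous_norm.measurable.comp
      apply Finset.measurable_prod
      intro i _
      apply Finset.measurable_prod
      intro j _
      exact (measurable_pi_apply j).sub (measurable_pi_apply i)
    · apply Finset.measurable_prod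
      intro j _
      apply Measurable.mul
      · exact hmeas.comp ((continuous_norm.measurable.comp
          (measurable_pi_apply j)).pow_const 2)
      · apply Finset.measurable_prod
        intro ℓ _
        exact continuous_norm.measurable.comp
          (by fun_prop : Measurable fun a : Fin N → ℂ => (a j - αv ℓ) / (a j - βv ℓ))
  · apply Filter.Eventually.of_forall
    intro z
    set A : ℝ := ‖∏ i : Fin N, ∏ j ∈ Finset.Ioi i, (z j - z i)‖ ^ 2 with hA
    set P : ℝ := ∏ j : Fin N, (ω (‖z j‖ ^ 2) *
      ∏ ℓ : Fin m, ‖(z j - αv ℓ) / (z j - βv ℓ)‖) with hP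
    have hAnn : 0 ≤ A := by positivity
    have hRnn : ∀ j, (0:ℝ) ≤ ∏ ℓ : Fin m, ‖(z j - αv ℓ) / (z j - βv ℓ)‖ :=
      fun j => Finset.prod_nonneg fun ℓ _ => norm_nonneg _
    -- |P| = ∏ |ω| * R
    have hPabs : |P| = ∏ j : Fin N, (|ω (‖z j‖ ^ 2)| *
        ∏ ℓ : Fin m, ‖(z j - αv ℓ) / (z j - βv ℓ)‖) := by
      rw [hP, Finset.abs_prod]
      apply Finset.prod_congr rfl
      intro j _
      rw [abs_mul, abs_of_nonneg (hRnn j)]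
    -- Vandermonde bound
    have hVdm : A ≤ ∏ k : Fin N, (1 + ‖z k‖) ^ n := by
      have h1 : A = ∏ i : Fin N, ∏ j ∈ Finset.Ioi i, ‖z j - z i‖ ^ 2 := by
        rw [hA, norm_prod]
        rw [← Finset.prod_pow]
        apply Finset.prod_congr rfl
        intro i _
        rw [norm_prod, ← Finset.prod_pow]
      have h2 : ∀ i j : Fin N, ‖z j - z i‖ ^ 2 ≤
          (1 + ‖z i‖) ^ 2 * (1 + ‖z j‖) ^ 2 := by
        intro i j
        have hb : ‖z j - z i‖ ≤ (1 + ‖z i‖) * (1 + ‖z j‖) := by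
          refine (norm_sub_le _ _).trans ?_
          have hi := norm_nonneg (z i)
          have hj := norm_nonneg (z j)
          nlinarith
        calc ‖z j - z i‖ ^ 2
            ≤ ((1 + ‖z i‖) * (1 + ‖z j‖)) ^ 2 := by
              apply pow_le_pow_left₀ (norm_nonneg _) hb
          _ = (1 + ‖z i‖) ^ 2 * (1 + ‖z j‖) ^ 2 := by ring
      calc A ≤ ∏ i : Fin N, ∏ j ∈ Finset.Ioi i,
            ((1 + ‖z i‖) ^ 2 * (1 + ‖z j‖) ^ 2) := by
            rw [h1]
            apply Finset.prod_le_prod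
            · intro i _; exact Finset.prod_nonneg fun j _ => sq_nonneg _
            · intro i _
              apply Finset.prod_le_prod
              · intro j _; exact sq_nonneg _
              · intro j _; exact h2 i j
        _ = ∏ k : Fin N, ((1 + ‖z k‖) ^ 2) ^ (N - 1) :=
            pf_prod_pair (fun k => (1 + ‖z k‖) ^ 2)
        _ = ∏ k : Fin N, (1 + ‖z k‖) ^ n := by
            apply Finset.prod_congr rfl
            intro k _
            rw [← pow_mul, hn]
            congr 1
            omega
    -- final comparison
    rw [Real.norm_eq_abs, Real.norm_eq_abs]
    have hGnn : (0:ℝ) ≤ ∏ j : Fin N, g (z j) :=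
      Finset.prod_nonneg fun j _ => mul_nonneg
        (mul_nonneg (by positivity) (abs_nonneg _)) (hRnn j)
    rw [abs_of_nonneg hGnn, abs_mul, abs_of_nonneg hAnn, hPabs]
    calc A * ∏ j : Fin N, (|ω (‖z j‖ ^ 2)| *
          ∏ ℓ : Fin m, ‖(z j - αv ℓ) / (z j - βv ℓ)‖)
        ≤ (∏ k : Fin N, (1 + ‖z k‖) ^ n) *
          ∏ j : Fin N, (|ω (‖z j‖ ^ 2)| *
            ∏ ℓ : Fin m, ‖(z j - αv ℓ) / (z j - βv ℓ)‖) := by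
          apply mul_le_mul_of_nonneg_right hVdm
          exact Finset.prod_nonneg fun j _ => mul_nonneg (abs_nonneg _) (hRnn j)
      _ = ∏ j : Fin N, g (z j) := by
          rw [← Finset.prod_mul_distrib]
          apply Finset.prod_congr rfl
          intro j _
          rw [hg]
          ring
end
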